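/- arXiv:2105.08373 — 3 statements merged into one kernel-verified Lean document; each statement's English description precedes it below -/
import Mathlib

section
/- Let (𝒳₀,𝒳₁) be a compatible couple of sequentially structured Banach spaces and let θ ∈ (0,1). Then (𝒳₀,𝒳₁)_θ, equipped with the norm ‖·‖_{(𝒳₀,𝒳₁)_θ}, is a Banach space, and there are continuous embeddings X₀ ∩ X₁ ↪ (𝒳₀,𝒳₁)_θ ↪ X₀ + X₁. -/
open scoped ENNReal NNReal
open Filter Topology

universe u v

/-- The axioms of a complete ("Banach") extended norm on a module over a normed field:
definiteness, the triangle inequality, homogeneity, and completeness of the finiteness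
domain.  A Banach space continuously embedded into an ambient space `E` is encoded as such
an extended norm on `E`; the Banach space itself is the finiteness domain. -/
def IsBanachENorm (𝕜 : Type*) {E : Type*} [NormedField 𝕜] [AddCommGroup E] [Module 𝕜 E]
    (N : E → ℝ≥0∞) : Prop :=
  (∀ x : E, N x = 0 → x = 0) ∧
  (∀ x y : E, N (x + y) ≤ N x + N y) ∧
  (∀ (c : 𝕜) (x : E), N (c • x) ≤ (‖c‖₊ : ℝ≥0∞) * N x) ∧
  (∀ f : ℕ → E, (∀ n, N (f n) ≠ ∞) →
    (∀ ε : ℝ≥0∞, 0 < ε → ∃ n₀ : ℕ, ∀ m, n₀ ≤ m → ∀ n, n₀ ≤ n → N (f m - f n) < ε) →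
    ∃ x : E, N x ≠ ∞ ∧ Filter.Tendsto (fun n => N (f n - x)) Filter.atTop (nhds 0))

/-- A Banach space continuously embedded into the ambient space `E`, encoded as a complete
extended norm on `E`. -/
structure BanachENorm (𝕜 : Type*) (E : Type*) [NormedField 𝕜] [AddCommGroup E]
    [Module 𝕜 E] where
  toFun : E → ℝ≥0∞
  isBanachENorm : IsBanachENorm 𝕜 toFun

/-- A sequence structure `𝔖` on the Banach space `X`: a Banach space of `X`-valued sequences
which is translation invariant, contains the single-entry sequences isometrically, and has
contractive coordinate projections. -/
structure SeqStructure (𝕜 : Type*) (E : Type*) [NormedField 𝕜] [AddCommGroup E] [Module 𝕜 E]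
    (X : BanachENorm 𝕜 E) where
  toFun : (ℤ → E) → ℝ≥0∞
  isBanachENorm : IsBanachENorm 𝕜 toFun
  single : ∀ (v : E) (n : ℤ), toFun (fun k => if k = n then v else 0) = X.toFun v
  shift : ∀ (x : ℤ → E) (n : ℤ), toFun (fun k => x (k + n)) = toFun x
  coord : ∀ (x : ℤ → E) (n : ℤ), X.toFun (x n) ≤ toFun x

/-- The `n`-th Cesàro mean `C_n x⃗ = (n+1)⁻¹ ∑_{m=0}^{n} x⃗⁽ᵐ⁾`, where `x⃗⁽ᵐ⁾` is the
truncation of `x⃗` to the indices `|k| ≤ m`. -/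
noncomputable def cesaro (𝕜 : Type*) {E : Type*} [NormedField 𝕜] [AddCommGroup E]
    [Module 𝕜 E] (n : ℕ) (x : ℤ → E) : ℤ → E :=
  fun k => (n + 1 : 𝕜)⁻¹ • ∑ m ∈ Finset.range (n + 1), (if |k| ≤ (m : ℤ) then x k else 0)

/-- An `ℓ∞`-sequence structure: the Cesàro operators are contractive. -/
def IsLinftySeqStructure {𝕜 E : Type*} [NormedField 𝕜] [AddCommGroup E] [Module 𝕜 E]
    {X : BanachENorm 𝕜 E} (S : SeqStructure 𝕜 E X) : Prop :=
  ∀ (n : ℕ) (x : ℤ → E), S.toFun (cesaro 𝕜 n x) ≤ S.toFun x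

/-- A `c₀`-sequence structure: the Cesàro operators are contractive and `C_n x⃗ → x⃗` in `𝔖`
for every `x⃗ ∈ 𝔖`. -/
def IsC0SeqStructure {𝕜 E : Type*} [NormedField 𝕜] [AddCommGroup E] [Module 𝕜 E]
    {X : BanachENorm 𝕜 E} (S : SeqStructure 𝕜 E X) : Prop :=
  IsLinftySeqStructure S ∧
    ∀ x : ℤ → E, S.toFun x ≠ ∞ →
      Filter.Tendsto (fun n => S.toFun (cesaro 𝕜 n x - x)) Filter.atTop (nhds 0)

/-- The extended norm of the sum of two extended-normed spaces. -/
noncomputable def enSum {V : Type*} [AddCommGroup V] (N M : V → ℝ≥0∞) : V → ℝ≥0∞ :=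
  fun v => ⨅ w : V, N w + M (v - w)

/-- The extended norm of the intersection of two extended-normed spaces. -/
def enInter {V : Type*} (N M : V → ℝ≥0∞) : V → ℝ≥0∞ := fun v => max (N v) (M v)

/-- The weighted sequence space `𝔖(a)`, `‖x⃗‖_{𝔖(a)} = ‖(a^k x_k)_k‖_𝔖`. -/
noncomputable def wtSeq {E : Type*} [AddCommGroup E] [Module ℝ E] (a : ℝ)
    (S : (ℤ → E) → ℝ≥0∞) : (ℤ → E) → ℝ≥0∞ :=
  fun x => S fun k => (a ^ k) • x k

/-- The sequentially structured interpolation extended norm with base number `b`: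
`‖v‖_{(𝒳₀,𝒳₁)_{θ;b}} = inf { max_{j=0,1} ‖(b^{k(j-θ)} x_k)_k‖_{𝔖_j} : ∑_k x_k = v }`,
the sum converging in the sum space `X₀ + X₁` (the ambient space `E`). -/
noncomputable def interpENormB {E : Type*} [NormedAddCommGroup E] [NormedSpace ℝ E] (b : ℝ)
    (S₀ S₁ : (ℤ → E) → ℝ≥0∞) (θ : ℝ) (v : E) : ℝ≥0∞ :=
  ⨅ (x : ℤ → E) (_ : HasSum x v),
    max (wtSeq (b ^ (-θ)) S₀ x) (wtSeq (b ^ (1 - θ)) S₁ x)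

/-- The sequentially structured interpolation extended norm (base number `e`). -/
noncomputable def interpENorm {E : Type*} [NormedAddCommGroup E] [NormedSpace ℝ E]
    (S₀ S₁ : (ℤ → E) → ℝ≥0∞) (θ : ℝ) (v : E) : ℝ≥0∞ :=
  ⨅ (x : ℤ → E) (_ : HasSum x v),
    max (wtSeq (Real.exp (-θ)) S₀ x) (wtSeq (Real.exp (1 - θ)) S₁ x)

/-- The mean-method formulation of the interpolation norm. -/
noncomputable def meanENorm {E : Type*} [AddCommGroup E] [Module ℝ E]
    (S₀ S₁ : (ℤ → E) → ℝ≥0∞) (θ : ℝ) (v : E) : ℝ≥0∞ :=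
  ⨅ (x0 : ℤ → E) (x1 : ℤ → E) (_ : ∀ k : ℤ, x0 k + x1 k = v),
    wtSeq (Real.exp (-θ)) S₀ x0 + wtSeq (Real.exp (1 - θ)) S₁ x1

/-- The dual extended norm on linear functionals. -/
noncomputable def dualENorm {E : Type*} [AddCommGroup E] [Module ℝ E] (N : E → ℝ≥0∞)
    (φ : E →ₗ[ℝ] ℝ) : ℝ≥0∞ :=
  ⨆ (x : E) (_ : N x ≤ 1), (‖φ x‖₊ : ℝ≥0∞)

/-- The dual sequence norm, via the pairing `⟨x⃗, x⃗*⟩ = ∑_k ⟨x_k, x*_k⟩`. -/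
noncomputable def dualSeqENorm {E : Type*} [AddCommGroup E] [Module ℝ E]
    (S : (ℤ → E) → ℝ≥0∞) (Φ : ℤ → E →ₗ[ℝ] ℝ) : ℝ≥0∞ :=
  ⨆ (x : ℤ → E) (_ : (Function.support x).Finite) (_ : S x ≤ 1),
    (‖∑ᶠ k : ℤ, Φ k (x k)‖₊ : ℝ≥0∞)

/-- The interpolation norm of the dual couple `(𝒳₀*,𝒳₁*)_θ`
(in its mean-method formulation). -/
noncomputable def dualInterpMean {E : Type*} [AddCommGroup E] [Module ℝ E]
    (S₀ S₁ : (ℤ → E) → ℝ≥0∞) (θ : ℝ) (φ : E →ₗ[ℝ] ℝ) : ℝ≥0∞ :=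
  ⨅ (Φ₀ : ℤ → E →ₗ[ℝ] ℝ) (Φ₁ : ℤ → E →ₗ[ℝ] ℝ) (_ : ∀ k : ℤ, Φ₀ k + Φ₁ k = φ),
    wtSeq (Real.exp (-θ)) (dualSeqENorm S₀) Φ₀ +
      wtSeq (Real.exp (1 - θ)) (dualSeqENorm S₁) Φ₁

/-- Membership in the closure, inside the space with extended norm `Nj`, of the space with
extended norm `N`. -/
def memClosIn {E : Type*} [AddCommGroup E] (Nj N : E → ℝ≥0∞) (w : E) : Prop :=
  Nj w ≠ ∞ ∧ ∀ ε : ℝ≥0∞, 0 < ε → ∃ u : E, N u ≠ ∞ ∧ Nj (w - u) < ε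

open Classical in
/-- The extended norm of the closure, inside the space with extended norm `Nj`, of the
space with extended norm `N`. -/
noncomputable def closENorm {E : Type*} [AddCommGroup E] (Nj N : E → ℝ≥0∞) : E → ℝ≥0∞ :=
  fun w => if memClosIn Nj N w then Nj w else ∞

/-- Membership in `𝔖^∘`, the closure in `𝔖` of the finitely nonzero sequences with entries
in the closure of the `N`-space inside the `Nj`-space. -/
def memSeqClos {E : Type*} [AddCommGroup E] (S : (ℤ → E) → ℝ≥0∞) (Nj N : E → ℝ≥0∞)
    (x : ℤ → E) : Prop :=
  S x ≠ ∞ ∧ ∀ ε : ℝ≥0∞, 0 < ε → ∃ y : ℤ → E,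
    (Function.support y).Finite ∧ (∀ k, memClosIn Nj N (y k)) ∧ S (x - y) < ε

open Classical in
/-- The extended norm of `𝔖^∘`. -/
noncomputable def seqClosENorm {E : Type*} [AddCommGroup E] (S : (ℤ → E) → ℝ≥0∞)
    (Nj N : E → ℝ≥0∞) : (ℤ → E) → ℝ≥0∞ :=
  fun x => if memSeqClos S Nj N x then S x else ∞

/-- The `(𝔖,𝔗)`-bound of an operator. -/
noncomputable def seqOpENorm {E F : Type*} [AddCommGroup E] [Module ℝ E]
    [AddCommGroup F] [Module ℝ F] (S : (ℤ → E) → ℝ≥0∞) (T : (ℤ → F) → ℝ≥0∞)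
    (A : E →ₗ[ℝ] F) : ℝ≥0∞ :=
  ⨆ (x : ℤ → E) (_ : S x ≤ 1), T fun k => A (x k)

/-- The open strip `𝕊 = {0 < Re z < 1}`. -/
def openStrip : Set ℂ := {z : ℂ | 0 < z.re ∧ z.re < 1}

/-- The closed strip `S̄ = {0 ≤ Re z ≤ 1}`. -/
def closedStrip : Set ℂ := {z : ℂ | 0 ≤ z.re ∧ z.re ≤ 1}

/-- The `k`-th Fourier coefficient of the `2π`-periodic function `t ↦ f (s + it)`. -/
noncomputable def fourierCoef {X : Type*} [NormedAddCommGroup X] [NormedSpace ℂ X]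
    (f : ℂ → X) (s : ℝ) (k : ℤ) : X :=
  (2 * (Real.pi : ℂ))⁻¹ • ∫ t in (-Real.pi)..Real.pi,
    Complex.exp (-(k : ℂ) * Complex.I * (t : ℂ)) • f ((s : ℂ) + (t : ℂ) * Complex.I)

/-- The lower complex formulation norm `‖·‖^{(c)}_{(𝒳₀,𝒳₁)_θ}`. -/
noncomputable def lowerCNorm {E : Type*} [NormedAddCommGroup E] [NormedSpace ℂ E]
    (S₀ S₁ : (ℤ → E) → ℝ≥0∞) (θ : ℝ) (v : E) : ℝ≥0∞ :=
  ⨅ (f : ℂ → E) (_ : ContinuousOn f closedStrip)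
    (_ : ∀ z ∈ openStrip, DifferentiableAt ℂ f z)
    (_ : ∀ z ∈ closedStrip, f (z + 2 * (Real.pi : ℂ) * Complex.I) = f z)
    (_ : f (θ : ℂ) = v),
    max (S₀ fun k => fourierCoef f 0 k) (S₁ fun k => fourierCoef f 1 k)

namespace StructInterp

theorem enorm_zero {E : Type*} [AddCommGroup E] [Module ℝ E] {N : E → ℝ≥0∞}
    (h : IsBanachENorm ℝ N) : N 0 = 0 := by
  have h0 : N ((0:ℝ) • (0:E)) ≤ (‖(0:ℝ)‖₊ : ℝ≥0∞) * N 0 := h.2.2.1 0 0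
  simp only [zero_smul, nnnorm_zero, ENNReal.coe_zero, zero_mul] at h0
  exact le_antisymm h0 (zero_le)

theorem enorm_neg {E : Type*} [AddCommGroup E] [Module ℝ E] {N : E → ℝ≥0∞}
    (h : IsBanachENorm ℝ N) (x : E) : N (-x) = N x := by
  have key : ∀ y : E, N (-y) ≤ N y := by
    intro y
    have := h.2.2.1 (-1 : ℝ) y
    simpa using this
  exact le_antisymm (key x) (by simpa using key (-x))

theorem enorm_sub_comm {E : Type*} [AddCommGroup E] [Module ℝ E] {N : E → ℝ≥0∞}
    (h : IsBanachENorm ℝ N) (x y : E) : N (x - y) = N (y - x) := by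
  rw [← neg_sub y x, enorm_neg h]

theorem enorm_sum_le {E : Type*} [AddCommGroup E] [Module ℝ E] {N : E → ℝ≥0∞}
    (h : IsBanachENorm ℝ N) {ι : Type*} (s : Finset ι) (f : ι → E) :
    N (∑ i ∈ s, f i) ≤ ∑ i ∈ s, N (f i) := by
  classical
  induction s using Finset.induction with
  | empty => simp [enorm_zero h]
  | insert a s hnot ih =>
      rw [Finset.sum_insert hnot, Finset.sum_insert hnot]
      exact (h.2.1 _ _).trans (add_le_add_right ih _)

theorem exp_zpow (t : ℝ) (j : ℤ) : (Real.exp t) ^ j = Real.exp (t * j) := by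
  rw [← Real.rpow_intCast, ← Real.exp_mul]

noncomputable def hcoef (θ : ℝ) (j : ℤ) : ℝ≥0∞ :=
  if 0 ≤ j then ENNReal.ofReal (Real.exp ((θ - 1) * j)) else ENNReal.ofReal (Real.exp (θ * j))

theorem one_le_hcoef_zero (θ : ℝ) : 1 ≤ hcoef θ 0 := by
  simp [hcoef]

theorem hcoef_tsum_ne_top {θ : ℝ} (hθ : θ ∈ Set.Ioo (0:ℝ) 1) : ∑' j : ℤ, hcoef θ j ≠ ∞ := by
  obtain ⟨hθ0, hθ1⟩ := hθ
  set r₁ : ℝ≥0∞ := ENNReal.ofReal (Real.exp (θ - 1)) with hr₁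
  set r₀ : ℝ≥0∞ := ENNReal.ofReal (Real.exp (-θ)) with hr₀
  have hr₁lt : r₁ < 1 := by
    rw [hr₁, ← ENNReal.ofReal_one]
    exact ENNReal.ofReal_lt_ofReal_iff (by norm_num) |>.2
      (Real.exp_lt_one_iff.2 (by linarith))
  have hr₀lt : r₀ < 1 := by
    rw [hr₀, ← ENNReal.ofReal_one]
    exact ENNReal.ofReal_lt_ofReal_iff (by norm_num) |>.2
      (Real.exp_lt_one_iff.2 (by linarith))
  have hpos : HasSum (fun n : ℕ => hcoef θ n) (∑' n : ℕ, hcoef θ n) := ENNReal.summable.hasSum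
  have hneg : HasSum (fun n : ℕ => hcoef θ (-(n + 1))) (∑' n : ℕ, hcoef θ (-(n + 1))) :=
    ENNReal.summable.hasSum
  have htot : HasSum (hcoef θ) (∑' n : ℕ, hcoef θ n + ∑' n : ℕ, hcoef θ (-(n + 1))) :=
    HasSum.of_nat_of_neg_add_one hpos hneg
  rw [htot.tsum_eq]
  have hb1 : ∀ n : ℕ, hcoef θ n ≤ r₁ ^ n := by
    intro n
    have h0 : (0:ℤ) ≤ (n:ℤ) := Int.ofNat_nonneg n
    simp only [hcoef, if_pos h0]
    rw [hr₁, ← ENNReal.ofReal_pow (Real.exp_nonneg _), ← Real.exp_nat_mul]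
    exact le_of_eq (by push_cast; ring_nf)
  have hb0 : ∀ n : ℕ, hcoef θ (-(n + 1)) ≤ r₀ ^ n := by
    intro n
    have h0 : ¬ (0:ℤ) ≤ -((n:ℤ) + 1) := by omega
    simp only [hcoef, if_neg h0]
    rw [hr₀, ← ENNReal.ofReal_pow (Real.exp_nonneg _), ← Real.exp_nat_mul]
    apply ENNReal.ofReal_le_ofReal
    apply Real.exp_le_exp.2
    push_cast
    nlinarith
  have h1 : ∑' n : ℕ, hcoef θ n ≤ (1 - r₁)⁻¹ := by
    rw [← ENNReal.tsum_geometric]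
    exact ENNReal.tsum_le_tsum hb1
  have h0 : ∑' n : ℕ, hcoef θ (-(n + 1)) ≤ (1 - r₀)⁻¹ := by
    rw [← ENNReal.tsum_geometric]
    exact ENNReal.tsum_le_tsum hb0
  have f1 : (1 - r₁)⁻¹ ≠ ∞ := by
    rw [ENNReal.inv_ne_top]
    simp [tsub_eq_zero_iff_le, not_le, hr₁lt]
  have f0 : (1 - r₀)⁻¹ ≠ ∞ := by
    rw [ENNReal.inv_ne_top]
    simp [tsub_eq_zero_iff_le, not_le, hr₀lt]
  exact ENNReal.add_ne_top.2 ⟨ne_top_of_le_ne_top f1 h1, ne_top_of_le_ne_top f0 h0⟩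

theorem coord_nnnorm_le {E : Type*} [NormedAddCommGroup E] [NormedSpace ℝ E]
    {X : BanachENorm ℝ E} (S : SeqStructure ℝ E X)
    (hX : ∀ v : E, (‖v‖₊ : ℝ≥0∞) ≤ X.toFun v)
    {a : ℝ} (ha : 0 < a) (x : ℤ → E) (j : ℤ) :
    (‖x j‖₊ : ℝ≥0∞) ≤ ENNReal.ofReal ((a ^ j)⁻¹) * wtSeq a S.toFun x := by
  have hne : a ^ j ≠ 0 := zpow_ne_zero j (ne_of_gt ha)
  have hxj : x j = (a ^ j)⁻¹ • (a ^ j • x j) := by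
    rw [smul_smul, inv_mul_cancel₀ hne, one_smul]
  have hnn : (‖(a ^ j)⁻¹‖₊ : ℝ≥0∞) = ENNReal.ofReal ((a ^ j)⁻¹) :=
    Real.enorm_eq_ofReal (by positivity)
  calc (‖x j‖₊ : ℝ≥0∞) ≤ X.toFun (x j) := hX _
    _ = X.toFun ((a ^ j)⁻¹ • (a ^ j • x j)) := by rw [← hxj]
    _ ≤ (‖(a ^ j)⁻¹‖₊ : ℝ≥0∞) * X.toFun (a ^ j • x j) := X.isBanachENorm.2.2.1 _ _
    _ ≤ ENNReal.ofReal ((a ^ j)⁻¹) * wtSeq a S.toFun x := by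
        rw [hnn]
        exact mul_le_mul_right (S.coord (fun k => a ^ k • x k) j) _

end StructInterp

namespace StructInterp

section Interp

variable {E : Type u} [NormedAddCommGroup E] [NormedSpace ℝ E]
  {N₀ N₁ : BanachENorm ℝ E}
  (S₀ : SeqStructure ℝ E N₀) (S₁ : SeqStructure ℝ E N₁) (θ : ℝ)

/-- `max` of the two weighted sequence norms. -/
noncomputable def Wmax (x : ℤ → E) : ℝ≥0∞ :=
  max (wtSeq (Real.exp (-θ)) S₀.toFun x) (wtSeq (Real.exp (1 - θ)) S₁.toFun x)

theorem interp_eq (v : E) :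
    interpENorm S₀.toFun S₁.toFun θ v = ⨅ (x : ℤ → E) (_ : HasSum x v), Wmax S₀ S₁ θ x := rfl

theorem interp_le_of_hasSum {v : E} {x : ℤ → E} (hx : HasSum x v) :
    interpENorm S₀.toFun S₁.toFun θ v ≤ Wmax S₀ S₁ θ x := by
  rw [interp_eq]
  exact iInf₂_le x hx

theorem exists_decomp {v : E} (hfin : interpENorm S₀.toFun S₁.toFun θ v ≠ ∞)
    {ε : ℝ≥0∞} (hε : 0 < ε) :
    ∃ x : ℤ → E, HasSum x v ∧ Wmax S₀ S₁ θ x < interpENorm S₀.toFun S₁.toFun θ v + ε := by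
  have hlt : interpENorm S₀.toFun S₁.toFun θ v <
      interpENorm S₀.toFun S₁.toFun θ v + ε := ENNReal.lt_add_right hfin hε.ne'
  rw [interp_eq] at hlt
  obtain ⟨x, hx⟩ := iInf_lt_iff.1 hlt
  obtain ⟨hhas, hx'⟩ := iInf_lt_iff.1 hx
  exact ⟨x, hhas, hx'⟩

theorem ennnorm_le_tsum_of_hasSum {ι : Type*} {x : ι → E} {v : E}
    (hx : HasSum x v) : (‖v‖₊ : ℝ≥0∞) ≤ ∑' j, (‖x j‖₊ : ℝ≥0∞) := by
  by_cases hfin : ∑' j, (‖x j‖₊ : ℝ≥0∞) = ∞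
  · simp [hfin]
  · have hs : Summable fun j => ‖x j‖₊ := ENNReal.tsum_coe_ne_top_iff_summable.1 hfin
    have hsn : Summable fun j => ‖x j‖ := by
      simpa only [coe_nnnorm] using NNReal.summable_coe.2 hs
    have h1 : ‖v‖ ≤ ∑' j, ‖x j‖ := by
      rw [← hx.tsum_eq]
      exact norm_tsum_le_tsum_norm hsn
    have h2 : (‖v‖₊ : ℝ≥0) ≤ ∑' j, ‖x j‖₊ := by
      rw [← NNReal.coe_le_coe, coe_nnnorm, NNReal.coe_tsum]
      simpa only [coe_nnnorm] using h1
    calc (‖v‖₊ : ℝ≥0∞) ≤ ((∑' j, ‖x j‖₊ : ℝ≥0) : ℝ≥0∞) := by exact_mod_cast h2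
      _ = ∑' j, (‖x j‖₊ : ℝ≥0∞) := ENNReal.coe_tsum hs

end Interp

section Couple

variable {E : Type u} [NormedAddCommGroup E] [NormedSpace ℝ E]
  {N₀ N₁ : BanachENorm ℝ E}
  (hcomp : ∀ v : E, enSum N₀.toFun N₁.toFun v = (‖v‖₊ : ℝ≥0∞))
  (S₀ : SeqStructure ℝ E N₀) (S₁ : SeqStructure ℝ E N₁) (θ : ℝ)

include hcomp

theorem nnnorm_le_left : ∀ v : E, (‖v‖₊ : ℝ≥0∞) ≤ N₀.toFun v := by
  intro v
  rw [← hcomp v]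
  calc enSum N₀.toFun N₁.toFun v ≤ N₀.toFun v + N₁.toFun (v - v) := iInf_le _ v
    _ = N₀.toFun v := by
        rw [sub_self, enorm_zero N₁.isBanachENorm, add_zero]

theorem nnnorm_le_right : ∀ v : E, (‖v‖₊ : ℝ≥0∞) ≤ N₁.toFun v := by
  intro v
  rw [← hcomp v]
  calc enSum N₀.toFun N₁.toFun v ≤ N₀.toFun 0 + N₁.toFun (v - 0) := iInf_le _ 0
    _ = N₁.toFun v := by
        rw [enorm_zero N₀.isBanachENorm, sub_zero, zero_add]

theorem nnnorm_coord_le (x : ℤ → E) (j : ℤ) :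
    (‖x j‖₊ : ℝ≥0∞) ≤ hcoef θ j * Wmax S₀ S₁ θ x := by
  by_cases hj : (0:ℤ) ≤ j
  · have h := coord_nnnorm_le S₁ (nnnorm_le_right hcomp) (Real.exp_pos (1 - θ)) x j
    have heq : ENNReal.ofReal ((Real.exp (1 - θ) ^ j)⁻¹) = hcoef θ j := by
      rw [exp_zpow, ← Real.exp_neg, hcoef, if_pos hj]
      ring_nf
    rw [heq] at h
    exact h.trans (mul_le_mul_right (le_max_right _ _) _)
  · have h := coord_nnnorm_le S₀ (nnnorm_le_left hcomp) (Real.exp_pos (-θ)) x j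
    have heq : ENNReal.ofReal ((Real.exp (-θ) ^ j)⁻¹) = hcoef θ j := by
      rw [exp_zpow, ← Real.exp_neg, hcoef, if_neg hj]
      ring_nf
    rw [heq] at h
    exact h.trans (mul_le_mul_right (le_max_left _ _) _)

theorem nnnorm_le_Ctot_mul_Wmax {v : E} {x : ℤ → E} (hx : HasSum x v) :
    (‖v‖₊ : ℝ≥0∞) ≤ (∑' j : ℤ, hcoef θ j) * Wmax S₀ S₁ θ x := by
  calc (‖v‖₊ : ℝ≥0∞) ≤ ∑' j, (‖x j‖₊ : ℝ≥0∞) := ennnorm_le_tsum_of_hasSum hx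
    _ ≤ ∑' j, hcoef θ j * Wmax S₀ S₁ θ x :=
        ENNReal.tsum_le_tsum fun j => nnnorm_coord_le hcomp S₀ S₁ θ x j
    _ = (∑' j : ℤ, hcoef θ j) * Wmax S₀ S₁ θ x := ENNReal.tsum_mul_right

theorem nnnorm_le_interp (hθ : θ ∈ Set.Ioo (0:ℝ) 1) (v : E) :
    (‖v‖₊ : ℝ≥0∞) ≤ (∑' j : ℤ, hcoef θ j) * interpENorm S₀.toFun S₁.toFun θ v := by
  set C := ∑' j : ℤ, hcoef θ j with hC
  have h1 : (1:ℝ≥0∞) ≤ C := (one_le_hcoef_zero θ).trans (ENNReal.le_tsum 0)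
  have hC0 : C ≠ 0 := by
    intro h
    rw [h] at h1
    simp at h1
  have hCt : C ≠ ∞ := hcoef_tsum_ne_top hθ
  by_cases hI : interpENorm S₀.toFun S₁.toFun θ v = ∞
  · rw [hI, ENNReal.mul_top hC0]
    exact le_top
  · apply ENNReal.le_of_forall_pos_le_add
    intro ε hε _
    have hδ : (0:ℝ≥0∞) < (ε : ℝ≥0∞) / C :=
      ENNReal.div_pos (by exact_mod_cast hε.ne') hCt
    obtain ⟨x, hx, hW⟩ := exists_decomp S₀ S₁ θ hI hδ
    calc (‖v‖₊ : ℝ≥0∞) ≤ C * Wmax S₀ S₁ θ x := nnnorm_le_Ctot_mul_Wmax hcomp S₀ S₁ θ hx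
      _ ≤ C * (interpENorm S₀.toFun S₁.toFun θ v + (ε : ℝ≥0∞) / C) :=
          mul_le_mul_right hW.le _
      _ = C * interpENorm S₀.toFun S₁.toFun θ v + C * ((ε : ℝ≥0∞) / C) := by
          rw [mul_add]
      _ ≤ C * interpENorm S₀.toFun S₁.toFun θ v + ε :=
          add_le_add_right ENNReal.mul_div_le _

end Couple

end StructInterp

namespace StructInterp

section Interp2

variable {E : Type u} [NormedAddCommGroup E] [NormedSpace ℝ E]
  {N₀ N₁ : BanachENorm ℝ E}
  (S₀ : SeqStructure ℝ E N₀) (S₁ : SeqStructure ℝ E N₁) (θ : ℝ)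

theorem wtSeq_zero {X : BanachENorm ℝ E} (S : SeqStructure ℝ E X) (a : ℝ) :
    wtSeq a S.toFun (0 : ℤ → E) = 0 := by
  have : (fun k : ℤ => a ^ k • (0 : ℤ → E) k) = (0 : ℤ → E) := by
    funext k; simp
  rw [wtSeq, this, enorm_zero S.isBanachENorm]

theorem interp_zero : interpENorm S₀.toFun S₁.toFun θ (0 : E) = 0 := by
  refine le_antisymm ?_ (zero_le)
  have h := interp_le_of_hasSum S₀ S₁ θ (v := (0:E)) (x := (0 : ℤ → E)) (by
    exact hasSum_zero)
  simpa [Wmax, wtSeq_zero] using h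

theorem wtSeq_add_le {X : BanachENorm ℝ E} (S : SeqStructure ℝ E X) (a : ℝ) (x y : ℤ → E) :
    wtSeq a S.toFun (x + y) ≤ wtSeq a S.toFun x + wtSeq a S.toFun y := by
  have hfun : (fun k : ℤ => a ^ k • (x + y) k) =
      (fun k : ℤ => a ^ k • x k) + fun k : ℤ => a ^ k • y k := by
    funext k; simp [smul_add]
  rw [wtSeq, hfun]
  exact S.isBanachENorm.2.1 _ _

theorem Wmax_add_le (x y : ℤ → E) :
    Wmax S₀ S₁ θ (x + y) ≤ Wmax S₀ S₁ θ x + Wmax S₀ S₁ θ y := by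
  refine max_le ?_ ?_
  · exact (wtSeq_add_le S₀ _ x y).trans
      (add_le_add (le_max_left _ _) (le_max_left _ _))
  · exact (wtSeq_add_le S₁ _ x y).trans
      (add_le_add (le_max_right _ _) (le_max_right _ _))

theorem interp_add_le (u v : E) :
    interpENorm S₀.toFun S₁.toFun θ (u + v) ≤
      interpENorm S₀.toFun S₁.toFun θ u + interpENorm S₀.toFun S₁.toFun θ v := by
  by_cases hu : interpENorm S₀.toFun S₁.toFun θ u = ∞
  · rw [hu]; simp
  by_cases hv : interpENorm S₀.toFun S₁.toFun θ v = ∞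
  · rw [hv]; simp
  apply ENNReal.le_of_forall_pos_le_add
  intro ε hε _
  have hε2 : (0:ℝ≥0∞) < (ε : ℝ≥0∞) / 2 :=
    ENNReal.div_pos (by exact_mod_cast hε.ne') (by norm_num)
  obtain ⟨x, hx, hWx⟩ := exists_decomp S₀ S₁ θ hu hε2
  obtain ⟨y, hy, hWy⟩ := exists_decomp S₀ S₁ θ hv hε2
  calc interpENorm S₀.toFun S₁.toFun θ (u + v) ≤ Wmax S₀ S₁ θ (x + y) :=
        interp_le_of_hasSum S₀ S₁ θ (hx.add hy)
    _ ≤ Wmax S₀ S₁ θ x + Wmax S₀ S₁ θ y := Wmax_add_le S₀ S₁ θ x y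
    _ ≤ (interpENorm S₀.toFun S₁.toFun θ u + (ε : ℝ≥0∞) / 2) +
          (interpENorm S₀.toFun S₁.toFun θ v + (ε : ℝ≥0∞) / 2) := add_le_add hWx.le hWy.le
    _ = interpENorm S₀.toFun S₁.toFun θ u + interpENorm S₀.toFun S₁.toFun θ v + ε := by
        rw [add_add_add_comm, ENNReal.add_halves]

theorem wtSeq_smul_le {X : BanachENorm ℝ E} (S : SeqStructure ℝ E X) (a : ℝ) (c : ℝ)
    (x : ℤ → E) :
    wtSeq a S.toFun (fun k => c • x k) ≤ (‖c‖₊ : ℝ≥0∞) * wtSeq a S.toFun x := by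
  have hfun : (fun k : ℤ => a ^ k • c • x k) = c • fun k : ℤ => a ^ k • x k := by
    funext k
    simp [smul_comm c]
  rw [wtSeq, hfun]
  exact S.isBanachENorm.2.2.1 _ _

theorem interp_smul_le (c : ℝ) (v : E) :
    interpENorm S₀.toFun S₁.toFun θ (c • v) ≤
      (‖c‖₊ : ℝ≥0∞) * interpENorm S₀.toFun S₁.toFun θ v := by
  rcases eq_or_ne c 0 with rfl | hc
  · rw [zero_smul, interp_zero]
    simp
  have hcn : (‖c‖₊ : ℝ≥0∞) ≠ 0 := by simpa using hc
  have hct : (‖c‖₊ : ℝ≥0∞) ≠ ∞ := ENNReal.coe_ne_top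
  by_cases hv : interpENorm S₀.toFun S₁.toFun θ v = ∞
  · rw [hv, ENNReal.mul_top hcn]
    exact le_top
  apply ENNReal.le_of_forall_pos_le_add
  intro ε hε _
  have hδ : (0:ℝ≥0∞) < (ε : ℝ≥0∞) / (‖c‖₊ : ℝ≥0∞) :=
    ENNReal.div_pos (by exact_mod_cast hε.ne') hct
  obtain ⟨x, hx, hW⟩ := exists_decomp S₀ S₁ θ hv hδ
  have hWs : Wmax S₀ S₁ θ (fun k => c • x k) ≤ (‖c‖₊ : ℝ≥0∞) * Wmax S₀ S₁ θ x := by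
    refine max_le ?_ ?_
    · exact (wtSeq_smul_le S₀ _ c x).trans (mul_le_mul_right (le_max_left _ _) _)
    · exact (wtSeq_smul_le S₁ _ c x).trans (mul_le_mul_right (le_max_right _ _) _)
  calc interpENorm S₀.toFun S₁.toFun θ (c • v) ≤ Wmax S₀ S₁ θ (fun k => c • x k) :=
        interp_le_of_hasSum S₀ S₁ θ (hx.const_smul c)
    _ ≤ (‖c‖₊ : ℝ≥0∞) * Wmax S₀ S₁ θ x := hWs
    _ ≤ (‖c‖₊ : ℝ≥0∞) * (interpENorm S₀.toFun S₁.toFun θ v + (ε : ℝ≥0∞) / (‖c‖₊ : ℝ≥0∞)) :=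
        mul_le_mul_right hW.le _
    _ = (‖c‖₊ : ℝ≥0∞) * interpENorm S₀.toFun S₁.toFun θ v +
          (‖c‖₊ : ℝ≥0∞) * ((ε : ℝ≥0∞) / (‖c‖₊ : ℝ≥0∞)) := by rw [mul_add]
    _ ≤ (‖c‖₊ : ℝ≥0∞) * interpENorm S₀.toFun S₁.toFun θ v + ε :=
        add_le_add_right ENNReal.mul_div_le _

theorem interp_le_enInter (v : E) :
    interpENorm S₀.toFun S₁.toFun θ v ≤ enInter N₀.toFun N₁.toFun v := by
  have hsingle : HasSum (fun k : ℤ => if k = 0 then v else 0) v := hasSum_ite_eq 0 v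
  have h := interp_le_of_hasSum S₀ S₁ θ hsingle
  have hw : ∀ (a : ℝ), (fun k : ℤ => a ^ k • (if k = 0 then v else 0)) =
      fun k : ℤ => if k = 0 then v else 0 := by
    intro a
    funext k
    by_cases hk : k = 0
    · simp [hk]
    · simp [hk]
  have h0 : wtSeq (Real.exp (-θ)) S₀.toFun (fun k => if k = 0 then v else 0) = N₀.toFun v := by
    rw [wtSeq, hw]
    exact S₀.single v 0
  have h1 : wtSeq (Real.exp (1 - θ)) S₁.toFun (fun k => if k = 0 then v else 0) = N₁.toFun v := by
    rw [wtSeq, hw]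
    exact S₁.single v 0
  rw [Wmax, h0, h1] at h
  exact h

end Interp2

end StructInterp

namespace StructInterp

set_option linter.unusedSectionVars false

theorem seq_count_triangle {E : Type u} [NormedAddCommGroup E] [NormedSpace ℝ E]
    {X : BanachENorm ℝ E} (S : SeqStructure ℝ E X)
    (hX : ∀ v : E, (‖v‖₊ : ℝ≥0∞) ≤ X.toFun v)
    (u : ℕ → ℤ → E) (hfin : ∑' k, S.toFun (u k) ≠ ∞)
    (z : ℤ → E) (hz : ∀ j, HasSum (fun k => u k j) (z j)) :
    S.toFun z ≤ ∑' k, S.toFun (u k) := by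
  classical
  set P : ℕ → ℤ → E := fun n => ∑ k ∈ Finset.range n, u k with hP
  have hPfin : ∀ n, S.toFun (P n) ≠ ∞ := by
    intro n
    have h1 : S.toFun (P n) ≤ ∑ k ∈ Finset.range n, S.toFun (u k) :=
      enorm_sum_le S.isBanachENorm _ _
    exact ne_top_of_le_ne_top hfin (h1.trans (ENNReal.sum_le_tsum _))
  have htail : Tendsto (fun i => ∑' k, S.toFun (u (k + i))) atTop (nhds 0) :=
    ENNReal.tendsto_sum_nat_add _ hfin
  -- key: for n₀ ≤ n ≤ m, `S (P m - P n) ≤ tail n₀`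
  have hkey : ∀ n₀ n m : ℕ, n₀ ≤ n → n ≤ m →
      S.toFun (P m - P n) ≤ ∑' k, S.toFun (u (k + n₀)) := by
    intro n₀ n m hn₀ hnm
    have hPmn : P m - P n = ∑ k ∈ Finset.Ico n m, u k := by
      rw [hP]
      simp only
      rw [Finset.sum_Ico_eq_sub _ hnm]
    rw [hPmn]
    refine (enorm_sum_le S.isBanachENorm _ _).trans ?_
    have himg : ∑ k ∈ Finset.Ico n m, S.toFun (u k) =
        ∑ j ∈ (Finset.Ico n m).image (· - n₀), S.toFun (u (j + n₀)) := by
      rw [Finset.sum_image]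
      · apply Finset.sum_congr rfl
        intro k hk
        have : n₀ ≤ k := le_trans hn₀ (Finset.mem_Ico.1 hk).1
        rw [Nat.sub_add_cancel this]
      · intro a ha b hb hab
        have ha' : n₀ ≤ a := le_trans hn₀ (Finset.mem_Ico.1 ha).1
        have hb' : n₀ ≤ b := le_trans hn₀ (Finset.mem_Ico.1 hb).1
        simp only at hab
        omega
    rw [himg]
    exact ENNReal.sum_le_tsum _
  -- Cauchy in `S`
  have hcauchy : ∀ ε : ℝ≥0∞, 0 < ε → ∃ n₀ : ℕ, ∀ m, n₀ ≤ m → ∀ n, n₀ ≤ n →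
      S.toFun (P m - P n) < ε := by
    intro ε hε
    obtain ⟨n₀, hn₀⟩ := (htail.eventually (gt_mem_nhds hε)).exists
    refine ⟨n₀, fun m hm n hn => ?_⟩
    rcases le_total n m with h | h
    · exact lt_of_le_of_lt (hkey n₀ n m hn h) hn₀
    · rw [enorm_sub_comm S.isBanachENorm]
      exact lt_of_le_of_lt (hkey n₀ m n hm h) hn₀
  obtain ⟨w, hwfin, hwconv⟩ := S.isBanachENorm.2.2.2 P hPfin hcauchy
  -- identify `w = z`
  have hwz : w = z := by
    funext j
    have h1 : ∀ n, (‖P n j - w j‖₊ : ℝ≥0∞) ≤ S.toFun (P n - w) := by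
      intro n
      refine (hX _).trans ?_
      have := S.coord (P n - w) j
      simpa using this
    have h2 : Tendsto (fun n => (‖P n j - w j‖₊ : ℝ≥0∞)) atTop (nhds 0) :=
      tendsto_of_tendsto_of_tendsto_of_le_of_le tendsto_const_nhds hwconv
        (fun n => zero_le) h1
    have h3 : Tendsto (fun n => ‖P n j - w j‖₊) atTop (nhds (0:ℝ≥0)) := by
      rw [← ENNReal.coe_zero] at h2
      exact ENNReal.tendsto_coe.1 h2
    have h4 : Tendsto (fun n => ‖P n j - w j‖) atTop (nhds (0:ℝ)) := by
      have := NNReal.tendsto_coe.2 h3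
      simpa [coe_nnnorm] using this
    have h5 : Tendsto (fun n => P n j) atTop (nhds (w j)) :=
      tendsto_iff_norm_sub_tendsto_zero.2 h4
    have h6 : Tendsto (fun n => P n j) atTop (nhds (z j)) := by
      have := (hz j).tendsto_sum_nat
      convert this using 2 with n
      simp [hP]
    exact tendsto_nhds_unique h5 h6
  -- conclude
  apply ENNReal.le_of_forall_pos_le_add
  intro ε hε _
  have hεc : (0:ℝ≥0∞) < (ε : ℝ≥0∞) := by exact_mod_cast hε
  obtain ⟨n, hn⟩ := (hwconv.eventually (gt_mem_nhds hεc)).exists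
  have hsplit : S.toFun w ≤ S.toFun (w - P n) + S.toFun (P n) := by
    have := S.isBanachENorm.2.1 (w - P n) (P n)
    rwa [sub_add_cancel] at this
  have h8 : S.toFun (w - P n) = S.toFun (P n - w) := enorm_sub_comm S.isBanachENorm _ _
  calc S.toFun z = S.toFun w := by rw [hwz]
    _ ≤ S.toFun (w - P n) + S.toFun (P n) := hsplit
    _ ≤ (ε : ℝ≥0∞) + ∑ k ∈ Finset.range n, S.toFun (u k) := by
        rw [h8]
        exact add_le_add hn.le (enorm_sum_le S.isBanachENorm _ _)
    _ ≤ (ε : ℝ≥0∞) + ∑' k, S.toFun (u k) := add_le_add_right (ENNReal.sum_le_tsum _) _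
    _ = ∑' k, S.toFun (u k) + ε := add_comm _ _

end StructInterp

namespace StructInterp

set_option linter.unusedSectionVars false

/-- For a Banach extended norm, a series with summable norms has partial sums converging
to some element. -/
theorem banach_partial_limit {V : Type*} [AddCommGroup V] [Module ℝ V] {N : V → ℝ≥0∞}
    (hN : IsBanachENorm ℝ N) (g : ℕ → V) (hfin : ∑' k, N (g k) ≠ ∞) :
    ∃ w : V, N w ≠ ∞ ∧
      Tendsto (fun n => N (∑ k ∈ Finset.range n, g k - w)) atTop (nhds 0) := by
  classical
  set P : ℕ → V := fun n => ∑ k ∈ Finset.range n, g k with hP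
  have hPfin : ∀ n, N (P n) ≠ ∞ := by
    intro n
    exact ne_top_of_le_ne_top hfin
      ((enorm_sum_le hN _ _).trans (ENNReal.sum_le_tsum _))
  have htail : Tendsto (fun i => ∑' k, N (g (k + i))) atTop (nhds 0) :=
    ENNReal.tendsto_sum_nat_add _ hfin
  have hkey : ∀ n₀ n m : ℕ, n₀ ≤ n → n ≤ m →
      N (P m - P n) ≤ ∑' k, N (g (k + n₀)) := by
    intro n₀ n m hn₀ hnm
    have hPmn : P m - P n = ∑ k ∈ Finset.Ico n m, g k := by
      rw [hP]
      simp only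
      rw [Finset.sum_Ico_eq_sub _ hnm]
    rw [hPmn]
    refine (enorm_sum_le hN _ _).trans ?_
    have himg : ∑ k ∈ Finset.Ico n m, N (g k) =
        ∑ j ∈ (Finset.Ico n m).image (· - n₀), N (g (j + n₀)) := by
      rw [Finset.sum_image]
      · apply Finset.sum_congr rfl
        intro k hk
        have : n₀ ≤ k := le_trans hn₀ (Finset.mem_Ico.1 hk).1
        rw [Nat.sub_add_cancel this]
      · intro a ha b hb hab
        have ha' : n₀ ≤ a := le_trans hn₀ (Finset.mem_Ico.1 ha).1
        have hb' : n₀ ≤ b := le_trans hn₀ (Finset.mem_Ico.1 hb).1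
        simp only at hab
        omega
    rw [himg]
    exact ENNReal.sum_le_tsum _
  have hcauchy : ∀ ε : ℝ≥0∞, 0 < ε → ∃ n₀ : ℕ, ∀ m, n₀ ≤ m → ∀ n, n₀ ≤ n →
      N (P m - P n) < ε := by
    intro ε hε
    obtain ⟨n₀, hn₀⟩ := (htail.eventually (gt_mem_nhds hε)).exists
    refine ⟨n₀, fun m hm n hn => ?_⟩
    rcases le_total n m with h | h
    · exact lt_of_le_of_lt (hkey n₀ n m hn h) hn₀
    · rw [enorm_sub_comm hN]
      exact lt_of_le_of_lt (hkey n₀ m n hm h) hn₀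
  obtain ⟨w, hwfin, hwconv⟩ := hN.2.2.2 P hPfin hcauchy
  exact ⟨w, hwfin, hwconv⟩

/-- The sum space of a compatible couple of Banach spaces is complete. -/
theorem complete_of_couple {E : Type u} [NormedAddCommGroup E] [NormedSpace ℝ E]
    (N₀ N₁ : BanachENorm ℝ E)
    (hcomp : ∀ v : E, enSum N₀.toFun N₁.toFun v = (‖v‖₊ : ℝ≥0∞)) :
    CompleteSpace E := by
  apply NormedAddCommGroup.completeSpace_of_summable_imp_tendsto
  intro u hu
  have hsplit : ∀ n : ℕ, ∃ a : E,
      N₀.toFun a + N₁.toFun (u n - a) ≤ (‖u n‖₊ : ℝ≥0∞) + (2⁻¹ : ℝ≥0∞) ^ n := by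
    intro n
    have h1 : enSum N₀.toFun N₁.toFun (u n) < (‖u n‖₊ : ℝ≥0∞) + (2⁻¹ : ℝ≥0∞) ^ n := by
      rw [hcomp]
      exact ENNReal.lt_add_right ENNReal.coe_ne_top
        (ENNReal.pow_pos (by norm_num) n).ne'
    obtain ⟨a, ha⟩ := iInf_lt_iff.1 h1
    exact ⟨a, ha.le⟩
  choose a ha using hsplit
  set b : ℕ → E := fun n => u n - a n with hb
  have hsum_norm : ∑' n, (‖u n‖₊ : ℝ≥0∞) ≠ ∞ := by
    rw [ENNReal.tsum_coe_ne_top_iff_summable]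
    exact NNReal.summable_coe.1 (by simpa [coe_nnnorm] using hu)
  have hgeo : ∑' n : ℕ, ((2:ℝ≥0∞)⁻¹) ^ n ≠ ∞ := by
    rw [ENNReal.tsum_geometric]
    simp [ENNReal.inv_ne_top]
  have hRHS : ∑' n, ((‖u n‖₊ : ℝ≥0∞) + (2⁻¹ : ℝ≥0∞) ^ n) ≠ ∞ := by
    rw [ENNReal.tsum_add]
    exact ENNReal.add_ne_top.2 ⟨hsum_norm, hgeo⟩
  have hA : ∑' n, N₀.toFun (a n) ≠ ∞ :=
    ne_top_of_le_ne_top hRHS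
      (ENNReal.tsum_le_tsum fun n =>
        ((le_add_right le_rfl : N₀.toFun (a n) ≤ _).trans (ha n)))
  have hB : ∑' n, N₁.toFun (b n) ≠ ∞ :=
    ne_top_of_le_ne_top hRHS
      (ENNReal.tsum_le_tsum fun n =>
        ((le_add_left le_rfl : N₁.toFun (b n) ≤ _).trans (ha n)))
  obtain ⟨wA, _, hwA⟩ := banach_partial_limit N₀.isBanachENorm a hA
  obtain ⟨wB, _, hwB⟩ := banach_partial_limit N₁.isBanachENorm b hB
  refine ⟨wA + wB, ?_⟩
  have hPu : ∀ n, ∑ i ∈ Finset.range n, u i =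
      (∑ i ∈ Finset.range n, a i) + ∑ i ∈ Finset.range n, b i := by
    intro n
    rw [← Finset.sum_add_distrib]
    apply Finset.sum_congr rfl
    intro i _
    rw [hb]
    rw [add_comm, sub_add_cancel]
  have hnn : ∀ n, (‖(∑ i ∈ Finset.range n, u i) - (wA + wB)‖₊ : ℝ≥0∞) ≤
      N₀.toFun (∑ i ∈ Finset.range n, a i - wA) +
      N₁.toFun (∑ i ∈ Finset.range n, b i - wB) := by
    intro n
    have heq : (∑ i ∈ Finset.range n, u i) - (wA + wB) =
        (∑ i ∈ Finset.range n, a i - wA) + (∑ i ∈ Finset.range n, b i - wB) := by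
      rw [hPu n]; abel
    rw [heq]
    calc (‖_ + _‖₊ : ℝ≥0∞) ≤ (‖∑ i ∈ Finset.range n, a i - wA‖₊ : ℝ≥0∞) +
          (‖∑ i ∈ Finset.range n, b i - wB‖₊ : ℝ≥0∞) := by
            exact_mod_cast nnnorm_add_le _ _
      _ ≤ _ := add_le_add (nnnorm_le_left hcomp _) (nnnorm_le_right hcomp _)
  have h2 : Tendsto (fun n => (‖(∑ i ∈ Finset.range n, u i) - (wA + wB)‖₊ : ℝ≥0∞))
      atTop (nhds 0) := by
    have hsum0 : Tendsto (fun n => N₀.toFun (∑ i ∈ Finset.range n, a i - wA) +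
        N₁.toFun (∑ i ∈ Finset.range n, b i - wB)) atTop (nhds 0) := by
      have := Tendsto.add hwA hwB
      simpa using this
    exact tendsto_of_tendsto_of_tendsto_of_le_of_le tendsto_const_nhds hsum0
      (fun n => zero_le) hnn
  have h3 : Tendsto (fun n => ‖(∑ i ∈ Finset.range n, u i) - (wA + wB)‖) atTop (nhds (0:ℝ)) := by
    rw [← ENNReal.coe_zero] at h2
    have := NNReal.tendsto_coe.2 (ENNReal.tendsto_coe.1 h2)
    simpa [coe_nnnorm] using this
  exact tendsto_iff_norm_sub_tendsto_zero.2 h3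

end StructInterp

namespace StructInterp

set_option linter.unusedSectionVars false

theorem interp_count {E : Type u} [NormedAddCommGroup E] [NormedSpace ℝ E]
    {N₀ N₁ : BanachENorm ℝ E}
    (hcomp : ∀ v : E, enSum N₀.toFun N₁.toFun v = (‖v‖₊ : ℝ≥0∞))
    (S₀ : SeqStructure ℝ E N₀) (S₁ : SeqStructure ℝ E N₁)
    {θ : ℝ} (hθ : θ ∈ Set.Ioo (0:ℝ) 1)
    (g : ℕ → E) (hfin : ∑' k, interpENorm S₀.toFun S₁.toFun θ (g k) ≠ ∞) :
    ∃ h : E, HasSum g h ∧ interpENorm S₀.toFun S₁.toFun θ h ≤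
      ∑' k, interpENorm S₀.toFun S₁.toFun θ (g k) := by
  classical
  haveI : CompleteSpace E := complete_of_couple N₀ N₁ hcomp
  set I : E → ℝ≥0∞ := interpENorm S₀.toFun S₁.toFun θ with hI
  set D : ℝ≥0∞ := ∑' k, I (g k) with hD
  set C : ℝ≥0∞ := ∑' j : ℤ, hcoef θ j with hC
  have hC_top : C ≠ ∞ := hcoef_tsum_ne_top hθ
  have hgfin : ∀ k, I (g k) ≠ ∞ := fun k => ne_top_of_le_ne_top hfin (ENNReal.le_tsum k)
  have hgsum : Summable g := by
    apply Summable.of_nnnorm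
    rw [← ENNReal.tsum_coe_ne_top_iff_summable]
    have hle : ∑' k, (‖g k‖₊ : ℝ≥0∞) ≤ C * D := by
      calc ∑' k, (‖g k‖₊ : ℝ≥0∞) ≤ ∑' k, C * I (g k) :=
            ENNReal.tsum_le_tsum fun k => nnnorm_le_interp hcomp S₀ S₁ θ hθ (g k)
        _ = C * D := ENNReal.tsum_mul_left
    exact ne_top_of_le_ne_top (ENNReal.mul_ne_top hC_top hfin) hle
  set h : E := ∑' k, g k with hh
  have hgh : HasSum g h := hgsum.hasSum
  refine ⟨h, hgh, ?_⟩
  apply ENNReal.le_of_forall_pos_le_add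
  intro ε hε hDlt
  have hεc : ((ε:ℝ≥0∞)) ≠ 0 := by exact_mod_cast hε.ne'
  set δ : ℕ → ℝ≥0∞ := fun k => ((ε:ℝ≥0∞)/2) * (2⁻¹:ℝ≥0∞) ^ k with hδ
  have hδpos : ∀ k, 0 < δ k := fun k =>
    ENNReal.mul_pos (ENNReal.div_pos hεc (by norm_num)).ne' (ENNReal.pow_pos (by norm_num) k).ne'
  have hδsum : ∑' k, δ k = (ε:ℝ≥0∞) := by
    rw [hδ]
    rw [ENNReal.tsum_mul_left, ENNReal.tsum_geometric]
    have h21 : ((1:ℝ≥0∞) - 2⁻¹)⁻¹ = 2 := by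
      rw [ENNReal.one_sub_inv_two]
      simp
    rw [h21, ENNReal.div_mul_cancel (by norm_num) (by norm_num)]
  have hdec : ∀ k, ∃ x : ℤ → E, HasSum x (g k) ∧
      Wmax S₀ S₁ θ x < I (g k) + δ k :=
    fun k => exists_decomp S₀ S₁ θ (hgfin k) (hδpos k)
  choose x hxs hxW using hdec
  have hbound : ∀ k j, (‖x k j‖₊ : ℝ≥0∞) ≤ hcoef θ j * (I (g k) + δ k) := fun k j =>
    (nnnorm_coord_le hcomp S₀ S₁ θ (x k) j).trans (mul_le_mul_right (hxW k).le _)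
  have hDδ : ∑' k, (I (g k) + δ k) = D + (ε:ℝ≥0∞) := by
    rw [ENNReal.tsum_add, hδsum, hD]
  have hDδfin : ∑' k, (I (g k) + δ k) ≠ ∞ := by
    rw [hDδ]
    exact ENNReal.add_ne_top.2 ⟨hDlt.ne, ENNReal.coe_ne_top⟩
  have hF : Summable (fun p : ℤ × ℕ => x p.2 p.1) := by
    apply Summable.of_nnnorm
    rw [← ENNReal.tsum_coe_ne_top_iff_summable]
    have hle : ∑' p : ℤ × ℕ, (‖x p.2 p.1‖₊ : ℝ≥0∞) ≤ C * ∑' k, (I (g k) + δ k) := by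
      rw [ENNReal.tsum_prod (f := fun j k => (‖x k j‖₊ : ℝ≥0∞))]
      calc ∑' (j : ℤ) (k : ℕ), (‖x k j‖₊ : ℝ≥0∞)
          ≤ ∑' (j : ℤ) (k : ℕ), hcoef θ j * (I (g k) + δ k) :=
            ENNReal.tsum_le_tsum fun j => ENNReal.tsum_le_tsum fun k => hbound k j
        _ = ∑' (j : ℤ), hcoef θ j * ∑' k, (I (g k) + δ k) := by
            apply tsum_congr
            intro j
            exact ENNReal.tsum_mul_left
        _ = C * ∑' k, (I (g k) + δ k) := by
            rw [ENNReal.tsum_mul_right, hC]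
    exact ne_top_of_le_ne_top (ENNReal.mul_ne_top hC_top hDδfin) hle
  have hrow : ∀ j : ℤ, Summable fun k => x k j := fun j => hF.prod_factor j
  set y : ℤ → E := fun j => ∑' k, x k j with hy
  have hyrow : ∀ j, HasSum (fun k => x k j) (y j) := fun j => (hrow j).hasSum
  set A : E := ∑' p : ℤ × ℕ, x p.2 p.1 with hA
  have hFA : HasSum (fun p : ℤ × ℕ => x p.2 p.1) A := hF.hasSum
  have hyA : HasSum y A := hFA.prod_fiberwise hyrow
  have hgA : HasSum g A := by
    have hswap : HasSum (fun p : ℕ × ℤ => x p.1 p.2) A :=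
      ((Equiv.prodComm ℕ ℤ).hasSum_iff).2 hFA
    exact hswap.prod_fiberwise hxs
  have hAh : A = h := hgA.unique hgh
  have hIh : I h ≤ Wmax S₀ S₁ θ y := by
    rw [← hAh]
    exact interp_le_of_hasSum S₀ S₁ θ hyA
  -- bound each weighted norm of `y` by countable subadditivity
  have hWfin0 : ∑' k, wtSeq (Real.exp (-θ)) S₀.toFun (x k) ≠ ∞ :=
    ne_top_of_le_ne_top hDδfin (ENNReal.tsum_le_tsum fun k =>
      ((le_max_left _ _).trans (hxW k).le))
  have hWfin1 : ∑' k, wtSeq (Real.exp (1 - θ)) S₁.toFun (x k) ≠ ∞ :=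
    ne_top_of_le_ne_top hDδfin (ENNReal.tsum_le_tsum fun k =>
      ((le_max_right _ _).trans (hxW k).le))
  have h₀ : wtSeq (Real.exp (-θ)) S₀.toFun y ≤
      ∑' k, wtSeq (Real.exp (-θ)) S₀.toFun (x k) := by
    apply seq_count_triangle S₀ (nnnorm_le_left hcomp)
      (fun k => fun j => Real.exp (-θ) ^ j • x k j) hWfin0
    intro j
    exact (hyrow j).const_smul _
  have h₁ : wtSeq (Real.exp (1 - θ)) S₁.toFun y ≤
      ∑' k, wtSeq (Real.exp (1 - θ)) S₁.toFun (x k) := by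
    apply seq_count_triangle S₁ (nnnorm_le_right hcomp)
      (fun k => fun j => Real.exp (1 - θ) ^ j • x k j) hWfin1
    intro j
    exact (hyrow j).const_smul _
  have hWy : Wmax S₀ S₁ θ y ≤ D + (ε:ℝ≥0∞) := by
    rw [← hDδ]
    refine max_le ?_ ?_
    · exact h₀.trans (ENNReal.tsum_le_tsum fun k => (le_max_left _ _).trans (hxW k).le)
    · exact h₁.trans (ENNReal.tsum_le_tsum fun k => (le_max_right _ _).trans (hxW k).le)
  exact hIh.trans hWy

end StructInterp

open StructInterp in
/-- For a compatible couple of sequentially structured Banach spaces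
`(𝒳₀,𝒳₁)` (here `E` is the sum space `X₀+X₁`, whose norm is the infimal sum norm of the
couple) and `θ ∈ (0,1)`, the interpolation space `(𝒳₀,𝒳₁)_θ` is a Banach space and
`X₀ ∩ X₁ ↪ (𝒳₀,𝒳₁)_θ ↪ X₀ + X₁` continuously. -/
theorem statement1 {E : Type u} [NormedAddCommGroup E] [NormedSpace ℝ E]
    (N₀ N₁ : BanachENorm ℝ E)
    (hcomp : ∀ v : E, enSum N₀.toFun N₁.toFun v = (‖v‖₊ : ℝ≥0∞))
    (S₀ : SeqStructure ℝ E N₀) (S₁ : SeqStructure ℝ E N₁)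
    (θ : ℝ) (hθ : θ ∈ Set.Ioo (0 : ℝ) 1) :
    IsBanachENorm ℝ (interpENorm S₀.toFun S₁.toFun θ) ∧
    (∃ C : ℝ≥0∞, C ≠ ∞ ∧ ∀ v : E,
      interpENorm S₀.toFun S₁.toFun θ v ≤ C * enInter N₀.toFun N₁.toFun v) ∧
    (∃ C : ℝ≥0∞, C ≠ ∞ ∧ ∀ v : E,
      (‖v‖₊ : ℝ≥0∞) ≤ C * interpENorm S₀.toFun S₁.toFun θ v) := by
  classical
  obtain ⟨hθ0, hθ1⟩ := hθ
  have hθ' : θ ∈ Set.Ioo (0:ℝ) 1 := ⟨hθ0, hθ1⟩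
  set I : E → ℝ≥0∞ := interpENorm S₀.toFun S₁.toFun θ with hIdef
  set C : ℝ≥0∞ := ∑' j : ℤ, hcoef θ j with hCdef
  have hC_top : C ≠ ∞ := hcoef_tsum_ne_top hθ'
  have hlow : ∀ v : E, (‖v‖₊ : ℝ≥0∞) ≤ C * I v := fun v =>
    nnnorm_le_interp hcomp S₀ S₁ θ hθ' v
  have hneg : ∀ v : E, I (-v) ≤ I v := by
    intro v
    have := interp_smul_le S₀ S₁ θ (-1 : ℝ) v
    simpa using this
  have htri : ∀ u v : E, I (u + v) ≤ I u + I v := interp_add_le S₀ S₁ θ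
  refine ⟨⟨?_, htri, interp_smul_le S₀ S₁ θ, ?_⟩, ⟨1, ENNReal.one_ne_top, ?_⟩,
    ⟨C, hC_top, hlow⟩⟩
  · -- definiteness
    intro v hv
    have h1 := hlow v
    rw [hv, mul_zero] at h1
    have h0 : (‖v‖₊ : ℝ≥0∞) = 0 := le_antisymm h1 (zero_le)
    simpa using h0
  · -- completeness
    intro f hffin hfc
    have hchoice : ∀ k : ℕ, ∃ n₀ : ℕ, ∀ m, n₀ ≤ m → ∀ n, n₀ ≤ n →
        I (f m - f n) < (2⁻¹ : ℝ≥0∞) ^ k :=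
      fun k => hfc _ (ENNReal.pow_pos (by norm_num) k)
    choose n₀ hn₀ using hchoice
    set φ : ℕ → ℕ := fun k => (Finset.range (k + 1)).sup n₀ with hφdef
    have hφ1 : ∀ k, n₀ k ≤ φ k := fun k =>
      Finset.le_sup (Finset.mem_range.2 (Nat.lt_succ_self k))
    have hφmono : Monotone φ := fun a b hab =>
      Finset.sup_mono (Finset.range_subset_range.2 (by omega))
    set gs : ℕ → E := fun k => f (φ (k + 1)) - f (φ k) with hgsdef
    have hgs : ∀ k, I (gs k) < (2⁻¹ : ℝ≥0∞) ^ k := by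
      intro k
      exact hn₀ k (φ (k + 1)) ((hφ1 k).trans (hφmono (Nat.le_succ k))) (φ k) (hφ1 k)
    have hgeo2 : ∑' k : ℕ, (2⁻¹ : ℝ≥0∞) ^ k = 2 := by
      rw [ENNReal.tsum_geometric, ENNReal.one_sub_inv_two]
      simp
    have htailk : ∀ m : ℕ, ∑' k, I (gs (k + m)) ≤ (2⁻¹ : ℝ≥0∞) ^ m * 2 := by
      intro m
      calc ∑' k, I (gs (k + m)) ≤ ∑' k : ℕ, (2⁻¹ : ℝ≥0∞) ^ (k + m) :=
            ENNReal.tsum_le_tsum fun k => (hgs _).le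
        _ = ∑' k : ℕ, (2⁻¹ : ℝ≥0∞) ^ m * (2⁻¹ : ℝ≥0∞) ^ k := by
            apply tsum_congr
            intro k
            rw [pow_add, mul_comm]
        _ = (2⁻¹ : ℝ≥0∞) ^ m * ∑' k : ℕ, (2⁻¹ : ℝ≥0∞) ^ k := ENNReal.tsum_mul_left
        _ = (2⁻¹ : ℝ≥0∞) ^ m * 2 := by rw [hgeo2]
    have hgsfin : ∑' k, I (gs k) ≠ ∞ := by
      have := htailk 0
      simp only [Nat.add_zero, pow_zero, one_mul] at this
      exact ne_top_of_le_ne_top (by norm_num) this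
    obtain ⟨s, hssum, hsle⟩ := interp_count hcomp S₀ S₁ hθ' gs hgsfin
    have hsfin : I s ≠ ∞ := ne_top_of_le_ne_top hgsfin hsle
    set x : E := f (φ 0) + s with hxdef
    have hxfin : I x ≠ ∞ := by
      refine ne_top_of_le_ne_top ?_ (htri (f (φ 0)) s)
      exact ENNReal.add_ne_top.2 ⟨hffin (φ 0), hsfin⟩
    refine ⟨x, hxfin, ?_⟩
    have hpartial : ∀ m : ℕ, f (φ m) - x = ∑ k ∈ Finset.range m, gs k - s := by
      intro m
      have hsum_eq : ∑ k ∈ Finset.range m, gs k = f (φ m) - f (φ 0) :=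
        Finset.sum_range_sub (fun k => f (φ k)) m
      rw [hsum_eq, hxdef]
      rw [sub_sub]
    have hm : ∀ m : ℕ, I (f (φ m) - x) ≤ (2⁻¹ : ℝ≥0∞) ^ m * 2 := by
      intro m
      have htail : HasSum (fun k => gs (k + m)) (s - ∑ k ∈ Finset.range m, gs k) := by
        rw [hasSum_nat_add_iff m, sub_add_cancel]
        exact hssum
      have htailfin : ∑' k, I (gs (k + m)) ≠ ∞ :=
        ne_top_of_le_ne_top (by simp [ENNReal.mul_ne_top]) (htailk m)
      obtain ⟨t, htsum, htle⟩ := interp_count hcomp S₀ S₁ hθ' (fun k => gs (k + m)) htailfin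
      have hts : t = s - ∑ k ∈ Finset.range m, gs k := htsum.unique htail
      have heq : f (φ m) - x = -t := by
        rw [hpartial m, hts, neg_sub]
      calc I (f (φ m) - x) = I (-t) := by rw [heq]
        _ ≤ I t := hneg t
        _ ≤ ∑' k, I (gs (k + m)) := htle
        _ ≤ (2⁻¹ : ℝ≥0∞) ^ m * 2 := htailk m
    rw [ENNReal.tendsto_nhds_zero]
    intro ε hε
    have h3 : Tendsto (fun m => 3 * (2⁻¹ : ℝ≥0∞) ^ m) atTop (nhds 0) := by
      have hp := ENNReal.tendsto_pow_atTop_nhds_zero_of_lt_one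
        (by norm_num : (2⁻¹ : ℝ≥0∞) < 1)
      have := ENNReal.Tendsto.const_mul hp (Or.inr (by norm_num : (3:ℝ≥0∞) ≠ ∞))
      simpa using this
    obtain ⟨m, hmlt⟩ := (h3.eventually (gt_mem_nhds hε)).exists
    filter_upwards [eventually_ge_atTop (φ m)] with n hn
    have h1 : I (f n - f (φ m)) < (2⁻¹ : ℝ≥0∞) ^ m :=
      hn₀ m n ((hφ1 m).trans hn) (φ m) (hφ1 m)
    have h2 : I (f n - x) ≤ I (f n - f (φ m)) + I (f (φ m) - x) := by
      have := htri (f n - f (φ m)) (f (φ m) - x)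
      rwa [sub_add_sub_cancel] at this
    calc I (f n - x) ≤ I (f n - f (φ m)) + I (f (φ m) - x) := h2
      _ ≤ (2⁻¹ : ℝ≥0∞) ^ m + (2⁻¹ : ℝ≥0∞) ^ m * 2 := add_le_add h1.le (hm m)
      _ = 3 * (2⁻¹ : ℝ≥0∞) ^ m := by ring
      _ ≤ ε := hmlt.le
  · -- upper embedding
    intro v
    rw [one_mul]
    exact interp_le_enInter S₀ S₁ θ v
end

section
/- Let (𝒳₀,𝒳₁) be a compatible couple of sequentially structured Banach spaces and let θ ∈ (0,1). For every x ∈ (𝒳₀,𝒳₁)_θ one has the two-sided estimate, with constants depending only on θ: ‖x‖_{(𝒳₀,𝒳₁)_θ} ≂_θ inf ‖x⃗‖_{𝔖₀(e^{−θ})}^{1−θ} · ‖x⃗‖_{𝔖₁(e^{1−θ})}^{θ}, where the infimum is over all sequences x⃗ ∈ 𝔖₀(e^{−θ}) ∩ 𝔖₁(e^{1−θ}) with Σ_{k∈ℤ} x_k = x convergent in X₀+X₁. In particular, ‖x‖_{(𝒳₀,𝒳₁)_θ} ≲_θ ‖x‖_{X₀}^{1−θ} ‖x‖_{X₁}^{θ}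 for all x ∈ X₀ ∩ X₁. -/
open scoped ENNReal NNReal
open Filter Topology

universe u v

section Helpers

variable {E : Type u} [NormedAddCommGroup E] [NormedSpace ℝ E]

/-- An extended norm with triangle inequality, homogeneity, and infimum `0` vanishes at `0`. -/
lemma enorm_zero_aux {V : Type*} [AddCommGroup V] [Module ℝ V] {f : V → ℝ≥0∞}
    (htri : ∀ x y : V, f (x + y) ≤ f x + f y)
    (hsm : ∀ (c : ℝ) (x : V), f (c • x) ≤ (‖c‖₊ : ℝ≥0∞) * f x)
    (h : (⨅ w : V, f w) = 0) : f 0 = 0 := by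
  have key : ∀ w : V, f 0 ≤ 2 * f w := by
    intro w
    have h1 : f 0 ≤ f w + f (-w) := by
      have := htri w (-w); rwa [add_neg_cancel] at this
    have h2 : f (-w) ≤ f w := by
      have := hsm (-1) w
      simpa [nnnorm_neg] using this
    calc f 0 ≤ f w + f w := h1.trans (add_le_add_right h2 _)
      _ = 2 * f w := (two_mul _).symm
  have h2 : f 0 ≤ 2 * ⨅ w : V, f w := by
    rw [ENNReal.mul_iInf_of_ne (by norm_num) (by norm_num)]
    exact le_iInf key
  simpa [h] using h2

lemma wtSeq_single {N : BanachENorm ℝ E} (S : SeqStructure ℝ E N) (r : ℝ) (v : E) :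
    wtSeq r S.toFun (fun k => if k = 0 then v else 0) = N.toFun v := by
  have h : (fun k : ℤ => (r ^ k) • (if k = (0 : ℤ) then v else 0)) =
      (fun k : ℤ => if k = (0 : ℤ) then v else 0) := by
    funext k; by_cases hk : k = 0 <;> simp [hk]
  show S.toFun (fun k : ℤ => (r ^ k) • (if k = (0 : ℤ) then v else 0)) = N.toFun v
  rw [h]
  exact S.single v 0

lemma wtSeq_zero {N : BanachENorm ℝ E} (S : SeqStructure ℝ E N) (r : ℝ) :
    wtSeq r S.toFun (fun _ => (0 : E)) = N.toFun 0 := by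
  rw [show (fun _ : ℤ => (0 : E)) = (fun k : ℤ => if k = (0 : ℤ) then (0 : E) else 0) by
    funext k; simp]
  exact wtSeq_single S r 0

lemma wtSeq_shift {N : BanachENorm ℝ E} (S : SeqStructure ℝ E N) {r : ℝ} (hr : 0 < r)
    (x : ℤ → E) (n : ℤ) :
    wtSeq r S.toFun (fun k => x (k + n)) ≤ (‖r ^ (-n)‖₊ : ℝ≥0∞) * wtSeq r S.toFun x := by
  have h : (fun k : ℤ => (r ^ k) • x (k + n)) =
      (fun k : ℤ => ((r ^ (-n)) • fun m : ℤ => (r ^ m) • x m) (k + n)) := by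
    funext k
    simp only [Pi.smul_apply, smul_smul]
    congr 1
    rw [← zpow_add₀ hr.ne']
    congr 1
    omega
  show S.toFun (fun k : ℤ => (r ^ k) • x (k + n)) ≤ _
  rw [h, S.shift]
  exact S.isBanachENorm.2.2.1 _ _

lemma wtSeq_eq_zero {N : BanachENorm ℝ E} (S : SeqStructure ℝ E N) {r : ℝ} (hr : 0 < r)
    {x : ℤ → E} (h : wtSeq r S.toFun x = 0) : x = fun _ => 0 := by
  have h0 := S.isBanachENorm.1 _ h
  funext k
  have hk : (r ^ k) • x k = 0 := congrFun h0 k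
  rcases smul_eq_zero.mp hk with h' | h'
  · exact absurd h' (zpow_ne_zero _ hr.ne')
  · exact h'

end Helpers

/-- The interpolation norm is equivalent, with constants depending only on
`θ`, to the infimum of the log-convex combinations
`‖x⃗‖_{𝔖₀(e^{-θ})}^{1-θ} ‖x⃗‖_{𝔖₁(e^{1-θ})}^{θ}` over all representations `∑_k x_k = x`;
in particular `‖x‖_θ ≲_θ ‖x‖_{X₀}^{1-θ}‖x‖_{X₁}^θ` for `x ∈ X₀ ∩ X₁`. -/
theorem statement2 (θ : ℝ) (hθ : θ ∈ Set.Ioo (0 : ℝ) 1) :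
    ∃ C : ℝ≥0∞, C ≠ 0 ∧ C ≠ ∞ ∧
      ∀ (E : Type u) [NormedAddCommGroup E] [NormedSpace ℝ E],
      ∀ N₀ N₁ : BanachENorm ℝ E,
        (∀ v : E, enSum N₀.toFun N₁.toFun v = (‖v‖₊ : ℝ≥0∞)) →
      ∀ (S₀ : SeqStructure ℝ E N₀) (S₁ : SeqStructure ℝ E N₁) (v : E),
        ((⨅ (x : ℤ → E) (_ : HasSum x v),
            (wtSeq (Real.exp (-θ)) S₀.toFun x) ^ (1 - θ) *
              (wtSeq (Real.exp (1 - θ)) S₁.toFun x) ^ θ) ≤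
          C * interpENorm S₀.toFun S₁.toFun θ v) ∧
        (interpENorm S₀.toFun S₁.toFun θ v ≤
          C * ⨅ (x : ℤ → E) (_ : HasSum x v),
            (wtSeq (Real.exp (-θ)) S₀.toFun x) ^ (1 - θ) *
              (wtSeq (Real.exp (1 - θ)) S₁.toFun x) ^ θ) ∧
        (enInter N₀.toFun N₁.toFun v ≠ ∞ →
          interpENorm S₀.toFun S₁.toFun θ v ≤
            C * (N₀.toFun v) ^ (1 - θ) * (N₁.toFun v) ^ θ) := by
  obtain ⟨hθ0, hθ1⟩ := hθ
  set C : ℝ≥0∞ := ENNReal.ofReal (Real.exp 1) with hCdef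
  have hC0 : C ≠ 0 := (ENNReal.ofReal_pos.mpr (Real.exp_pos 1)).ne'
  have hCt : C ≠ ∞ := ENNReal.ofReal_ne_top
  have hC1 : (1 : ℝ≥0∞) ≤ C := by
    rw [hCdef, ← ENNReal.ofReal_one]
    exact ENNReal.ofReal_le_ofReal (Real.one_le_exp (by norm_num))
  refine ⟨C, hC0, hCt, ?_⟩
  intro E _ _ N₀ N₁ hsum S₀ S₁ v
  -- the extended norms vanish at 0
  have hz : (⨅ w : E, N₀.toFun w + N₁.toFun ((0 : E) - w)) = 0 := by
    have := hsum 0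
    simpa [enSum] using this
  have hiInf₀ : (⨅ w : E, N₀.toFun w) = 0 :=
    le_antisymm (hz ▸ iInf_mono fun w => le_self_add) zero_le
  have hiInf₁ : (⨅ w : E, N₁.toFun w) = 0 := by
    refine le_antisymm ?_ zero_le
    rw [← hz]
    exact le_iInf fun w => (iInf_le _ ((0 : E) - w)).trans le_add_self
  have hN₀0 : N₀.toFun 0 = 0 :=
    enorm_zero_aux N₀.isBanachENorm.2.1 N₀.isBanachENorm.2.2.1 hiInf₀
  have hN₁0 : N₁.toFun 0 = 0 :=
    enorm_zero_aux N₁.isBanachENorm.2.1 N₁.isBanachENorm.2.2.1 hiInf₁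
  -- key pointwise estimate
  have key : ∀ x : ℤ → E, HasSum x v →
      interpENorm S₀.toFun S₁.toFun θ v ≤
        C * ((wtSeq (Real.exp (-θ)) S₀.toFun x) ^ (1 - θ) *
          (wtSeq (Real.exp (1 - θ)) S₁.toFun x) ^ θ) := by
    intro x hx
    set a := wtSeq (Real.exp (-θ)) S₀.toFun x with ha
    set b := wtSeq (Real.exp (1 - θ)) S₁.toFun x with hb
    by_cases hv : v = 0
    · subst hv
      have hI0 : interpENorm S₀.toFun S₁.toFun θ (0 : E) ≤ 0 := by
        have h0 : HasSum (fun _ : ℤ => (0 : E)) (0 : E) := hasSum_zero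
        calc interpENorm S₀.toFun S₁.toFun θ (0 : E)
            ≤ max (wtSeq (Real.exp (-θ)) S₀.toFun (fun _ => (0 : E)))
              (wtSeq (Real.exp (1 - θ)) S₁.toFun (fun _ => (0 : E))) := by
              unfold interpENorm
              exact iInf₂_le (fun _ => (0 : E)) h0
          _ = max (N₀.toFun 0) (N₁.toFun 0) := by rw [wtSeq_zero, wtSeq_zero]
          _ = 0 := by rw [hN₀0, hN₁0]; simp
      exact hI0.trans zero_le
    · have ha0 : a ≠ 0 := by
        intro h
        apply hv
        have hx0 : x = fun _ => 0 := wtSeq_eq_zero S₀ (Real.exp_pos _) h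
        rw [hx0] at hx
        exact hx.unique hasSum_zero
      have hb0 : b ≠ 0 := by
        intro h
        apply hv
        have hx0 : x = fun _ => 0 := wtSeq_eq_zero S₁ (Real.exp_pos _) h
        rw [hx0] at hx
        exact hx.unique hasSum_zero
      by_cases hat : a = ∞
      · have : C * (a ^ (1 - θ) * b ^ θ) = ∞ := by
          rw [hat, ENNReal.top_rpow_of_pos (by linarith), ENNReal.top_mul
            (by simpa using (ENNReal.rpow_eq_zero_iff_of_pos hθ0).not.mpr hb0),
            ENNReal.mul_top hC0]
        rw [this]; exact le_top
      by_cases hbt : b = ∞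
      · have : C * (a ^ (1 - θ) * b ^ θ) = ∞ := by
          rw [hbt, ENNReal.top_rpow_of_pos hθ0, ENNReal.mul_top
            (by simpa using (ENNReal.rpow_eq_zero_iff_of_pos (by linarith : (0:ℝ) < 1 - θ)).not.mpr ha0),
            ENNReal.mul_top hC0]
        rw [this]; exact le_top
      -- main case: 0 < a, b < ∞
      have hA : 0 < a.toReal := ENNReal.toReal_pos ha0 hat
      have hB : 0 < b.toReal := ENNReal.toReal_pos hb0 hbt
      set α := Real.log a.toReal with hα
      set β := Real.log b.toReal with hβ
      set n : ℤ := ⌊β - α⌋ with hn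
      have hn1 : (n : ℝ) ≤ β - α := Int.floor_le _
      have hn2 : β - α < n + 1 := Int.lt_floor_add_one _
      have haE : a = ENNReal.ofReal (Real.exp α) := by
        rw [hα, Real.exp_log hA, ENNReal.ofReal_toReal hat]
      have hbE : b = ENNReal.ofReal (Real.exp β) := by
        rw [hβ, Real.exp_log hB, ENNReal.ofReal_toReal hbt]
      have hy : HasSum (fun k : ℤ => x (k + n)) v := by
        have := (Equiv.addRight n).hasSum_iff.mpr hx
        exact this
      have hpow₀ : (‖Real.exp (-θ) ^ (-n)‖₊ : ℝ≥0∞) = ENNReal.ofReal (Real.exp (θ * n)) := by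
        rw [show Real.exp (-θ) ^ (-n) = Real.exp (θ * n) by
          rw [← Real.rpow_intCast (Real.exp (-θ)) (-n), Real.rpow_def_of_pos (Real.exp_pos _),
            Real.log_exp]
          push_cast
          ring_nf]
        exact Real.enorm_eq_ofReal (Real.exp_pos _).le
      have hpow₁ : (‖Real.exp (1 - θ) ^ (-n)‖₊ : ℝ≥0∞) =
          ENNReal.ofReal (Real.exp ((θ - 1) * n)) := by
        rw [show Real.exp (1 - θ) ^ (-n) = Real.exp ((θ - 1) * n) by
          rw [← Real.rpow_intCast (Real.exp (1 - θ)) (-n), Real.rpow_def_of_pos (Real.exp_pos _),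
            Real.log_exp]
          push_cast
          ring_nf]
        exact Real.enorm_eq_ofReal (Real.exp_pos _).le
      have h0 : wtSeq (Real.exp (-θ)) S₀.toFun (fun k => x (k + n)) ≤
          ENNReal.ofReal (Real.exp (θ * n)) * a := by
        refine (wtSeq_shift S₀ (Real.exp_pos _) x n).trans_eq ?_
        rw [hpow₀, ha]
      have h1 : wtSeq (Real.exp (1 - θ)) S₁.toFun (fun k => x (k + n)) ≤
          ENNReal.ofReal (Real.exp ((θ - 1) * n)) * b := by
        refine (wtSeq_shift S₁ (Real.exp_pos _) x n).trans_eq ?_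
        rw [hpow₁, hb]
      have hrhs : C * (a ^ (1 - θ) * b ^ θ) =
          ENNReal.ofReal (Real.exp (1 + (α * (1 - θ) + β * θ))) := by
        have ha' : a ^ (1 - θ) = ENNReal.ofReal (Real.exp (α * (1 - θ))) := by
          rw [haE, ENNReal.ofReal_rpow_of_pos (Real.exp_pos _),
            Real.rpow_def_of_pos (Real.exp_pos _), Real.log_exp]
        have hb' : b ^ θ = ENNReal.ofReal (Real.exp (β * θ)) := by
          rw [hbE, ENNReal.ofReal_rpow_of_pos (Real.exp_pos _),
            Real.rpow_def_of_pos (Real.exp_pos _), Real.log_exp]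
        rw [ha', hb', hCdef, ← ENNReal.ofReal_mul (Real.exp_pos _).le,
          ← ENNReal.ofReal_mul (Real.exp_pos _).le, ← Real.exp_add, ← Real.exp_add]
      have hstep : interpENorm S₀.toFun S₁.toFun θ v ≤
          max (wtSeq (Real.exp (-θ)) S₀.toFun (fun k => x (k + n)))
            (wtSeq (Real.exp (1 - θ)) S₁.toFun (fun k => x (k + n))) := by
        unfold interpENorm
        exact iInf₂_le (fun k => x (k + n)) hy
      calc interpENorm S₀.toFun S₁.toFun θ v
          ≤ max (wtSeq (Real.exp (-θ)) S₀.toFun (fun k => x (k + n)))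
            (wtSeq (Real.exp (1 - θ)) S₁.toFun (fun k => x (k + n))) := hstep
        _ ≤ max (ENNReal.ofReal (Real.exp (θ * n)) * a)
            (ENNReal.ofReal (Real.exp ((θ - 1) * n)) * b) := max_le_max h0 h1
        _ ≤ C * (a ^ (1 - θ) * b ^ θ) := by
            rw [hrhs, haE, hbE, ← ENNReal.ofReal_mul (Real.exp_pos _).le,
              ← ENNReal.ofReal_mul (Real.exp_pos _).le, ← Real.exp_add, ← Real.exp_add]
            refine max_le (ENNReal.ofReal_le_ofReal (Real.exp_le_exp.mpr ?_))
              (ENNReal.ofReal_le_ofReal (Real.exp_le_exp.mpr ?_))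
            · nlinarith [mul_le_mul_of_nonneg_left hn1 hθ0.le]
            · nlinarith [mul_le_mul_of_nonneg_left hn2.le (by linarith : (0:ℝ) ≤ 1 - θ)]
  -- part 2
  have part2 : interpENorm S₀.toFun S₁.toFun θ v ≤
      C * ⨅ (x : ℤ → E) (_ : HasSum x v),
        (wtSeq (Real.exp (-θ)) S₀.toFun x) ^ (1 - θ) *
          (wtSeq (Real.exp (1 - θ)) S₁.toFun x) ^ θ := by
    rw [ENNReal.mul_iInf_of_ne hC0 hCt]
    refine le_iInf fun x => ?_
    rw [ENNReal.mul_iInf_of_ne hC0 hCt]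
    exact le_iInf (key x)
  -- part 1
  have part1 : (⨅ (x : ℤ → E) (_ : HasSum x v),
      (wtSeq (Real.exp (-θ)) S₀.toFun x) ^ (1 - θ) *
        (wtSeq (Real.exp (1 - θ)) S₁.toFun x) ^ θ) ≤
      C * interpENorm S₀.toFun S₁.toFun θ v := by
    have hJI : (⨅ (x : ℤ → E) (_ : HasSum x v),
        (wtSeq (Real.exp (-θ)) S₀.toFun x) ^ (1 - θ) *
          (wtSeq (Real.exp (1 - θ)) S₁.toFun x) ^ θ) ≤
        interpENorm S₀.toFun S₁.toFun θ v := by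
      unfold interpENorm
      refine iInf_mono fun x => iInf_mono fun hx => ?_
      set a := wtSeq (Real.exp (-θ)) S₀.toFun x
      set b := wtSeq (Real.exp (1 - θ)) S₁.toFun x
      calc a ^ (1 - θ) * b ^ θ
          ≤ (max a b) ^ (1 - θ) * (max a b) ^ θ :=
            mul_le_mul' (ENNReal.rpow_le_rpow (le_max_left a b) (by linarith))
              (ENNReal.rpow_le_rpow (le_max_right a b) hθ0.le)
        _ = (max a b) ^ ((1 - θ) + θ) :=
            (ENNReal.rpow_add_of_nonneg _ _ (by linarith) hθ0.le).symm
        _ = max a b := by rw [show (1 - θ) + θ = 1 by ring, ENNReal.rpow_one]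
    exact hJI.trans (le_mul_of_one_le_left zero_le hC1)
  refine ⟨part1, part2, fun _ => ?_⟩
  -- part 3
  have hs : HasSum (fun k : ℤ => if k = 0 then v else 0) v := hasSum_ite_eq 0 v
  have hJ : (⨅ (x : ℤ → E) (_ : HasSum x v),
      (wtSeq (Real.exp (-θ)) S₀.toFun x) ^ (1 - θ) *
        (wtSeq (Real.exp (1 - θ)) S₁.toFun x) ^ θ) ≤
      (N₀.toFun v) ^ (1 - θ) * (N₁.toFun v) ^ θ := by
    refine iInf₂_le_of_le _ hs ?_
    rw [wtSeq_single, wtSeq_single]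
  calc interpENorm S₀.toFun S₁.toFun θ v
      ≤ C * ⨅ (x : ℤ → E) (_ : HasSum x v),
        (wtSeq (Real.exp (-θ)) S₀.toFun x) ^ (1 - θ) *
          (wtSeq (Real.exp (1 - θ)) S₁.toFun x) ^ θ := part2
    _ ≤ C * ((N₀.toFun v) ^ (1 - θ) * (N₁.toFun v) ^ θ) := mul_le_mul_right hJ C
    _ = C * (N₀.toFun v) ^ (1 - θ) * (N₁.toFun v) ^ θ := (mul_assoc _ _ _).symm
end

section
/- Let (𝒳₀,𝒳₁) be a compatible couple of sequentially structured Banach spaces with 𝔖₀ and 𝔖₁ both ℓ∞-sequence structures, let X̆ be a dense linear subspace of X₀ ∩ X₁, and let θ ∈ (0,1). Then for every x ∈ X̆: ‖x‖_{(𝒳₀,𝒳₁)_θ} ≂ inf max_{j=0,1} ‖(e^{k(j−θ)} x_k)_{k∈ℤ}‖_{𝔖_j}, with implicit constants depending only on θ, where the infimum is taken over all finitely nonzero sequences x⃗ with entries in X̆ such that Σ_{k∈ℤ} x_k = x. -/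
open scoped ENNReal NNReal
open Filter Topology

universe u v

set_option linter.unusedSectionVars false

section Statement4Aux

variable {E : Type u} [AddCommGroup E] [Module ℝ E]

lemma ibn_zero {N : E → ℝ≥0∞} (hN : IsBanachENorm ℝ N) : N 0 = 0 :=
  le_antisymm (by simpa using hN.2.2.1 (0 : ℝ) 0) zero_le

lemma ibn_neg {N : E → ℝ≥0∞} (hN : IsBanachENorm ℝ N) (v : E) : N (-v) ≤ N v := by
  simpa using hN.2.2.1 (-1 : ℝ) v

lemma ibn_sub {N : E → ℝ≥0∞} (hN : IsBanachENorm ℝ N) (a b : E) :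
    N (a - b) ≤ N a + N b := by
  rw [sub_eq_add_neg]
  exact (hN.2.1 a (-b)).trans (add_le_add le_rfl (ibn_neg hN b))

lemma ibn_sum_le {N : E → ℝ≥0∞} (hN : IsBanachENorm ℝ N) {ι : Type*} (s : Finset ι)
    (f : ι → E) : N (∑ i ∈ s, f i) ≤ ∑ i ∈ s, N (f i) := by
  classical
  refine Finset.induction_on s ?_ ?_
  · simp [ibn_zero hN]
  · intro a t ha ih
    rw [Finset.sum_insert ha, Finset.sum_insert ha]
    exact (hN.2.1 _ _).trans (add_le_add le_rfl ih)

lemma seriesLim {N : E → ℝ≥0∞} (hN : IsBanachENorm ℝ N) (g : ℕ → E)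
    (h : ∑' i, N (g i) ≠ ∞) :
    ∃ s : E, N s ≤ ∑' i, N (g i) ∧
      Tendsto (fun J => N ((∑ i ∈ Finset.range J, g i) - s)) atTop (𝓝 0) := by
  set f : ℕ → E := fun J => ∑ i ∈ Finset.range J, g i with hf
  have hfin : ∀ J, N (f J) ≠ ∞ := by
    intro J
    exact ne_top_of_le_ne_top h ((ibn_sum_le hN _ g).trans (ENNReal.sum_le_tsum _))
  have htail : Tendsto (fun i => ∑' k, N (g (k + i))) atTop (𝓝 0) :=
    ENNReal.tendsto_sum_nat_add (fun i => N (g i)) h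
  have hC : ∀ ε : ℝ≥0∞, 0 < ε → ∃ n₀ : ℕ, ∀ m, n₀ ≤ m → ∀ n, n₀ ≤ n →
      N (f m - f n) < ε := by
    intro ε hε
    obtain ⟨n₀, hn₀⟩ := (htail.eventually_lt_const hε).exists
    refine ⟨n₀, ?_⟩
    have key : ∀ m n, n₀ ≤ n → n ≤ m → N (f m - f n) < ε := by
      intro m n hn hnm
      have h1 : f m - f n = ∑ i ∈ Finset.Ico n m, g i := by
        rw [hf]
        rw [Finset.sum_Ico_eq_sub _ hnm]
      rw [h1]
      refine lt_of_le_of_lt ?_ hn₀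
      refine (ibn_sum_le hN _ g).trans ?_
      have h2 : ∑ i ∈ Finset.Ico n m, N (g i) ≤ ∑ i ∈ Finset.Ico n₀ m, N (g i) :=
        Finset.sum_le_sum_of_subset (Finset.Ico_subset_Ico hn le_rfl)
      refine h2.trans ?_
      rw [Finset.sum_Ico_eq_sum_range]
      exact (ENNReal.sum_le_tsum _).trans (le_of_eq (by
        congr 1; funext k; rw [Nat.add_comm]))
    intro m hm n hn
    rcases le_total n m with hh | hh
    · exact key m n hn hh
    · have := key n m hm hh
      calc N (f m - f n) ≤ N (f n - f m) := by
            have : f m - f n = -(f n - f m) := (neg_sub _ _).symm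
            rw [this]; exact ibn_neg hN _
        _ < ε := this
  obtain ⟨s, hsfin, hs⟩ := hN.2.2.2 f hfin hC
  refine ⟨s, ?_, hs⟩
  refine ENNReal.le_of_forall_pos_le_add ?_
  intro ε hε hlt
  obtain ⟨J, hJ⟩ := (hs.eventually_lt_const (by exact_mod_cast hε : (0:ℝ≥0∞) < ε)).exists
  calc N s ≤ N (s - f J) + N (f J) := by
        have : s = (s - f J) + f J := by abel
        nth_rewrite 1 [this]
        exact hN.2.1 _ _
    _ ≤ N (f J - s) + ∑' i, N (g i) := by
        refine add_le_add ?_ ((ibn_sum_le hN _ g).trans (ENNReal.sum_le_tsum _))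
        have : s - f J = -(f J - s) := by abel
        rw [this]; exact ibn_neg hN _
    _ ≤ (∑' i, N (g i)) + ε := by
        rw [add_comm]
        exact add_le_add le_rfl hJ.le

end Statement4Aux

section Statement4Aux2

variable {E : Type u} [NormedAddCommGroup E] [NormedSpace ℝ E]

lemma tendsto_of_enorm {N : E → ℝ≥0∞} (hbound : ∀ v : E, (‖v‖₊ : ℝ≥0∞) ≤ N v)
    {f : ℕ → E} {s : E} (h : Tendsto (fun J => N (f J - s)) atTop (𝓝 0)) :
    Tendsto f atTop (𝓝 s) := by
  have h1 : Tendsto (fun J => (‖f J - s‖₊ : ℝ≥0∞)) atTop (𝓝 0) :=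
    tendsto_of_tendsto_of_tendsto_of_le_of_le tendsto_const_nhds h
      (fun J => zero_le) (fun J => hbound _)
  rw [← ENNReal.coe_zero] at h1
  have h2 : Tendsto (fun J => ‖f J - s‖₊) atTop (𝓝 0) := ENNReal.tendsto_coe.mp h1
  have h3 : Tendsto (fun J => ‖f J - s‖) atTop (𝓝 (0:ℝ)) := by
    have := NNReal.tendsto_coe.mpr h2
    simpa using this
  have h4 : Tendsto (fun J => f J - s) atTop (𝓝 0) :=
    tendsto_zero_iff_norm_tendsto_zero.mpr h3
  simpa using tendsto_sub_nhds_zero_iff.mp h4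

lemma seq_le_sum {X : BanachENorm ℝ E} (S : SeqStructure ℝ E X) (s : Finset ℤ)
    (y : ℤ → E) (hy : ∀ j ∉ s, y j = 0) :
    S.toFun y ≤ ∑ j ∈ s, X.toFun (y j) := by
  classical
  have hrep : y = ∑ j ∈ s, (fun k => if k = j then y j else 0) := by
    funext k
    rw [Finset.sum_apply]
    rw [Finset.sum_ite_eq s k y]
    by_cases hk : k ∈ s
    · simp [hk]
    · simp [hk, hy k hk]
  calc S.toFun y = S.toFun (∑ j ∈ s, (fun k => if k = j then y j else 0)) := by rw [← hrep]
    _ ≤ ∑ j ∈ s, S.toFun (fun k => if k = j then y j else 0) :=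
        ibn_sum_le S.isBanachENorm s _
    _ = ∑ j ∈ s, X.toFun (y j) := by
        refine Finset.sum_congr rfl fun j _ => ?_
        exact S.single (y j) j

lemma wt_cesaro_eq (a : ℝ) (n : ℕ) (x : ℤ → E) :
    (fun k => a ^ k • cesaro ℝ n x k) = cesaro ℝ n (fun k => a ^ k • x k) := by
  funext k
  simp only [cesaro]
  rw [smul_comm, Finset.smul_sum]
  congr 1
  refine Finset.sum_congr rfl fun m _ => ?_
  split <;> simp

lemma wt_cesaro_le {X : BanachENorm ℝ E} {S : SeqStructure ℝ E X}
    (hS : IsLinftySeqStructure S) (a : ℝ) (n : ℕ) (x : ℤ → E) :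
    wtSeq a S.toFun (cesaro ℝ n x) ≤ wtSeq a S.toFun x := by
  unfold wtSeq
  rw [wt_cesaro_eq]
  exact hS n _

lemma sum_Icc_int (F : ℤ → ℝ≥0∞) (n : ℕ) :
    ∑ j ∈ Finset.Icc (0:ℤ) (n:ℤ), F j = ∑ i ∈ Finset.range (n+1), F (i:ℤ) := by
  refine (Finset.sum_nbij' (fun (i:ℕ) => (i:ℤ)) (fun (j:ℤ) => j.toNat) ?_ ?_ ?_ ?_ ?_).symm
  · intro i hi; simp only [Finset.mem_range] at hi; simp only [Finset.mem_Icc]; omega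
  · intro j hj; simp only [Finset.mem_Icc] at hj; simp only [Finset.mem_range]; omega
  · intro i _; simp
  · intro j hj; simp only [Finset.mem_Icc] at hj; simpa using Int.toNat_of_nonneg hj.1
  · intro i _; rfl

lemma sum_Icc_neg_int (F : ℤ → ℝ≥0∞) (n : ℕ) :
    ∑ j ∈ Finset.Icc (-(n:ℤ)) (0:ℤ), F j = ∑ i ∈ Finset.range (n+1), F (-(i:ℤ)) := by
  refine (Finset.sum_nbij' (fun (i:ℕ) => -(i:ℤ)) (fun (j:ℤ) => (-j).toNat) ?_ ?_ ?_ ?_ ?_).symm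
  · intro i hi; simp only [Finset.mem_range] at hi; simp only [Finset.mem_Icc]; omega
  · intro j hj; simp only [Finset.mem_Icc] at hj; simp only [Finset.mem_range]; omega
  · intro i _; simp
  · intro j hj; simp only [Finset.mem_Icc] at hj
    have h0 : (0:ℤ) ≤ -j := by omega
    simp only [Int.toNat_of_nonneg h0]; omega
  · intro i _; rfl

lemma geom_range_le (r : ℝ≥0∞) (n : ℕ) :
    ∑ i ∈ Finset.range n, r ^ i ≤ (1 - r)⁻¹ :=
  (ENNReal.sum_le_tsum _).trans_eq (ENNReal.tsum_geometric _)

end Statement4Aux2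

section Statement4Aux3

variable {β : Type v} [AddCommMonoid β]

lemma sum_Ioc_glue (f : ℤ → β) {a b c : ℤ} (h1 : a ≤ b) (h2 : b ≤ c) :
    ∑ k ∈ Finset.Ioc a b, f k + ∑ k ∈ Finset.Ioc b c, f k = ∑ k ∈ Finset.Ioc a c, f k := by
  rw [← Finset.Ioc_union_Ioc_eq_Ioc h1 h2, Finset.sum_union]
  exact Finset.disjoint_left.2 fun t ht h't =>
    lt_irrefl _ ((Finset.mem_Ioc.1 h't).1.trans_le (Finset.mem_Ioc.1 ht).2)

lemma sum_range_down (f : ℤ → β) (m : ℤ) (J : ℕ) :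
    ∑ i ∈ Finset.range J, f (m - (i:ℤ)) = ∑ k ∈ Finset.Ioc (m - (J:ℤ)) m, f k := by
  refine Finset.sum_nbij' (fun (i:ℕ) => m - (i:ℤ)) (fun (j:ℤ) => (m - j).toNat) ?_ ?_ ?_ ?_ ?_
  · intro i hi; simp only [Finset.mem_range] at hi; simp only [Finset.mem_Ioc]; omega
  · intro j hj; simp only [Finset.mem_Ioc] at hj; simp only [Finset.mem_range]; omega
  · intro i _; simp
  · intro j hj; simp only [Finset.mem_Ioc] at hj
    have h0 : (0:ℤ) ≤ m - j := by omega
    simp only [Int.toNat_of_nonneg h0]; omega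
  · intro i _; rfl

lemma sum_bIcc (f : ℤ → β) (n : ℕ) :
    ∑ j ∈ Finset.Icc (0:ℤ) (n:ℤ), f j = ∑ i ∈ Finset.range (n+1), f (i:ℤ) := by
  refine (Finset.sum_nbij' (fun (i:ℕ) => (i:ℤ)) (fun (j:ℤ) => j.toNat) ?_ ?_ ?_ ?_ ?_).symm
  · intro i hi; simp only [Finset.mem_range] at hi; simp only [Finset.mem_Icc]; omega
  · intro j hj; simp only [Finset.mem_Icc] at hj; simp only [Finset.mem_range]; omega
  · intro i _; simp
  · intro j hj; simp only [Finset.mem_Icc] at hj; simpa using Int.toNat_of_nonneg hj.1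
  · intro i _; rfl

lemma sum_bIccNeg (f : ℤ → β) (n : ℕ) :
    ∑ j ∈ Finset.Icc (-(n:ℤ)) (0:ℤ), f j = ∑ i ∈ Finset.range (n+1), f (-(i:ℤ)) := by
  refine (Finset.sum_nbij' (fun (i:ℕ) => -(i:ℤ)) (fun (j:ℤ) => (-j).toNat) ?_ ?_ ?_ ?_ ?_).symm
  · intro i hi; simp only [Finset.mem_range] at hi; simp only [Finset.mem_Icc]; omega
  · intro j hj; simp only [Finset.mem_Icc] at hj; simp only [Finset.mem_range]; omega
  · intro i _; simp
  · intro j hj; simp only [Finset.mem_Icc] at hj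
    have h0 : (0:ℤ) ≤ -j := by omega
    simp only [Int.toNat_of_nonneg h0]; omega
  · intro i _; rfl

end Statement4Aux3

section Statement4Aux4

variable {E : Type u} [NormedAddCommGroup E] [NormedSpace ℝ E]

/-- Construction of the partial tails `A m = "∑_{k ≤ m} x_k"` inside the Banach space `N`. -/
lemma tails {N : E → ℝ≥0∞} (hN : IsBanachENorm ℝ N) (hb : ∀ v : E, (‖v‖₊:ℝ≥0∞) ≤ N v)
    (xv : ℤ → E) {ρ : ℝ≥0} (hρ0 : ρ ≠ 0) (hρ1 : (ρ:ℝ≥0∞) < 1)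
    {M : ℝ≥0∞} (hM : M ≠ ∞) (hx : ∀ k : ℤ, N (xv k) ≤ ((ρ ^ (-k) : ℝ≥0) : ℝ≥0∞) * M)
    (m : ℤ) : ∃ A : E, N A ≤ ((ρ ^ (-m) : ℝ≥0) : ℝ≥0∞) * M * (1 - (ρ:ℝ≥0∞))⁻¹ ∧
      Tendsto (fun J : ℕ => ∑ k ∈ Finset.Ioc (m - (J:ℤ)) m, xv k) atTop (𝓝 A) := by
  have hcoe : ∀ j : ℤ, ((ρ ^ j : ℝ≥0) : ℝ≥0∞) = ((ρ:ℝ≥0∞)) ^ j := fun j =>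
    ENNReal.coe_zpow hρ0 j
  have hρtop : (ρ:ℝ≥0∞) ≠ ∞ := ENNReal.coe_ne_top
  have hρ0' : (ρ:ℝ≥0∞) ≠ 0 := by exact_mod_cast hρ0
  have hbound : ∀ i : ℕ, N (xv (m - (i:ℤ))) ≤ ((ρ:ℝ≥0∞) ^ (-m) * M) * (ρ:ℝ≥0∞) ^ (i:ℕ) := by
    intro i
    refine (hx _).trans ?_
    rw [hcoe]
    have h2 : -(m - (i:ℤ)) = -m + (i:ℤ) := by ring
    rw [h2, ENNReal.zpow_add hρ0' hρtop, zpow_natCast]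
    ring_nf
    exact le_rfl
  have htsum : ∑' i : ℕ, N (xv (m - (i:ℤ))) ≤
      ((ρ ^ (-m) : ℝ≥0) : ℝ≥0∞) * M * (1 - (ρ:ℝ≥0∞))⁻¹ := by
    refine (ENNReal.tsum_le_tsum hbound).trans ?_
    rw [ENNReal.tsum_mul_left, ENNReal.tsum_geometric, hcoe]
  have hone : (1:ℝ≥0∞) - (ρ:ℝ≥0∞) ≠ 0 := by
    have := tsub_pos_of_lt hρ1
    exact this.ne'
  have hfin : ∑' i : ℕ, N (xv (m - (i:ℤ))) ≠ ∞ := by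
    refine ne_top_of_le_ne_top ?_ htsum
    exact ENNReal.mul_ne_top (ENNReal.mul_ne_top ENNReal.coe_ne_top hM)
      (ENNReal.inv_ne_top.mpr hone)
  obtain ⟨A, hA1, hA2⟩ := seriesLim hN (fun i => xv (m - (i:ℤ))) hfin
  refine ⟨A, hA1.trans htsum, ?_⟩
  have hE : Tendsto (fun J : ℕ => ∑ i ∈ Finset.range J, xv (m - (i:ℤ))) atTop (𝓝 A) :=
    tendsto_of_enorm hb hA2
  refine hE.congr fun J => ?_
  exact sum_range_down xv m J

end Statement4Aux4

section Statement4Aux5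

variable {β : Type v} [AddCommMonoid β]

lemma sum_Ioc_neg (f : ℤ → β) (c d : ℤ) :
    ∑ k ∈ Finset.Ioc c d, f (-k) = ∑ j ∈ Finset.Ioc (-d-1) (-c-1), f j := by
  refine Finset.sum_nbij' (fun (k:ℤ) => -k) (fun (j:ℤ) => -j) ?_ ?_ ?_ ?_ ?_
  · intro k hk; simp only [Finset.mem_Ioc] at hk ⊢; omega
  · intro j hj; simp only [Finset.mem_Ioc] at hj ⊢; omega
  · intro k _; simp
  · intro j _; simp
  · intro k _; rfl

end Statement4Aux5

section Statement4Core

variable {E : Type u} [NormedAddCommGroup E] [NormedSpace ℝ E]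

lemma core (θ : ℝ) (hθ0 : 0 < θ) (hθ1 : θ < 1)
    (N₀b N₁b : BanachENorm ℝ E)
    (hsum : ∀ v : E, enSum N₀b.toFun N₁b.toFun v = (‖v‖₊ : ℝ≥0∞))
    (S₀ : SeqStructure ℝ E N₀b) (S₁ : SeqStructure ℝ E N₁b)
    (hS₀ : IsLinftySeqStructure S₀) (hS₁ : IsLinftySeqStructure S₁)
    (D : Submodule ℝ E)
    (hDfin : ∀ w ∈ D, enInter N₀b.toFun N₁b.toFun w ≠ ∞)
    (hdense : ∀ v : E, enInter N₀b.toFun N₁b.toFun v ≠ ∞ → ∀ ε : ℝ≥0∞, 0 < ε →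
      ∃ w ∈ D, enInter N₀b.toFun N₁b.toFun (v - w) < ε)
    (x : E) (hxD : x ∈ D) (xv : ℤ → E) (hxv : HasSum xv x)
    (hM₀ : wtSeq (Real.exp (-θ)) S₀.toFun xv ≠ ∞)
    (hM₁ : wtSeq (Real.exp (1-θ)) S₁.toFun xv ≠ ∞)
    (n : ℕ) (ε : ℝ≥0∞) (hε : 0 < ε) (hεtop : ε ≠ ∞) :
    (⨅ (y : ℤ → E) (_ : (Function.support y).Finite) (_ : ∀ k, y k ∈ D)
        (_ : ∑ᶠ k : ℤ, y k = x),
      max (wtSeq (Real.exp (-θ)) S₀.toFun y) (wtSeq (Real.exp (1-θ)) S₁.toFun y))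
    ≤ (1 + 2 * (1 - (‖Real.exp (-θ)‖₊ : ℝ≥0∞))⁻¹ + 2 * (1 - (‖Real.exp (θ-1)‖₊ : ℝ≥0∞))⁻¹)
        * max (wtSeq (Real.exp (-θ)) S₀.toFun xv) (wtSeq (Real.exp (1-θ)) S₁.toFun xv)
      + ((n:ℝ≥0∞)+1)⁻¹ *
          (((1 - (‖Real.exp (-θ)‖₊ : ℝ≥0∞))⁻¹ + (1 - (‖Real.exp (θ-1)‖₊ : ℝ≥0∞))⁻¹)
            * (N₀b.toFun x + N₁b.toFun x))
      + ε := by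
  classical
  set N₀ : E → ℝ≥0∞ := N₀b.toFun with hN₀def
  set N₁ : E → ℝ≥0∞ := N₁b.toFun with hN₁def
  set a₀ : ℝ := Real.exp (-θ) with ha₀def
  set a₁ : ℝ := Real.exp (1-θ) with ha₁def
  set r₀ : ℝ≥0 := ‖Real.exp (-θ)‖₊ with hr₀def
  set r₁ : ℝ≥0 := ‖Real.exp (θ-1)‖₊ with hr₁def
  set M₀ : ℝ≥0∞ := wtSeq a₀ S₀.toFun xv with hM₀def
  set M₁ : ℝ≥0∞ := wtSeq a₁ S₁.toFun xv with hM₁def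
  set c₀ : ℝ≥0∞ := (1 - (r₀:ℝ≥0∞))⁻¹ with hc₀def
  set c₁ : ℝ≥0∞ := (1 - (r₁:ℝ≥0∞))⁻¹ with hc₁def
  set cn : ℝ≥0∞ := ((n:ℝ≥0∞)+1)⁻¹ with hcndef
  set cn' : ℝ := ((n:ℝ)+1)⁻¹ with hcn'def
  -- basic facts about the weights
  have hr₀0 : r₀ ≠ 0 := by
    simp only [hr₀def, ne_eq, nnnorm_eq_zero]
    exact Real.exp_ne_zero _
  have hr₁0 : r₁ ≠ 0 := by
    simp only [hr₁def, ne_eq, nnnorm_eq_zero]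
    exact Real.exp_ne_zero _
  have hr₀coe : (r₀ : ℝ) = a₀ := by
    rw [hr₀def, ha₀def, coe_nnnorm, Real.norm_eq_abs, abs_of_pos (Real.exp_pos _)]
  have hr₁coe : (r₁ : ℝ) = Real.exp (θ-1) := by
    rw [hr₁def, coe_nnnorm, Real.norm_eq_abs, abs_of_pos (Real.exp_pos _)]
  have hr₀1 : (r₀:ℝ≥0∞) < 1 := by
    rw [← ENNReal.coe_one, ENNReal.coe_lt_coe, ← NNReal.coe_lt_coe, hr₀coe]
    simpa [ha₀def] using Real.exp_lt_one_iff.mpr (by linarith : -θ < 0)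
  have hr₁1 : (r₁:ℝ≥0∞) < 1 := by
    rw [← ENNReal.coe_one, ENNReal.coe_lt_coe, ← NNReal.coe_lt_coe, hr₁coe]
    simpa using Real.exp_lt_one_iff.mpr (by linarith : θ - 1 < 0)
  have hc₀top : c₀ ≠ ∞ := ENNReal.inv_ne_top.mpr (tsub_pos_of_lt hr₀1).ne'
  have hc₁top : c₁ ≠ ∞ := ENNReal.inv_ne_top.mpr (tsub_pos_of_lt hr₁1).ne'
  have hc₀1 : (1:ℝ≥0∞) ≤ c₀ := by
    rw [hc₀def, ENNReal.one_le_inv]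
    exact tsub_le_self
  have hc₁1 : (1:ℝ≥0∞) ≤ c₁ := by
    rw [hc₁def, ENNReal.one_le_inv]
    exact tsub_le_self
  have hIB₀ := N₀b.isBanachENorm
  have hIB₁ := N₁b.isBanachENorm
  -- the constituent norms dominate the ambient norm
  have hb₀ : ∀ v : E, (‖v‖₊:ℝ≥0∞) ≤ N₀ v := by
    intro v
    rw [← hsum v]
    calc enSum N₀b.toFun N₁b.toFun v ≤ N₀ v + N₁ (v - v) := iInf_le _ v
      _ = N₀ v := by
          rw [sub_self, (ibn_zero hIB₁ : N₁ (0:E) = 0), add_zero]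
  have hb₁ : ∀ v : E, (‖v‖₊:ℝ≥0∞) ≤ N₁ v := by
    intro v
    rw [← hsum v]
    calc enSum N₀b.toFun N₁b.toFun v ≤ N₀ 0 + N₁ (v - 0) := iInf_le _ 0
      _ = N₁ v := by
          rw [sub_zero, (ibn_zero hIB₀ : N₀ (0:E) = 0), zero_add]
  have hom₀ : ∀ (c : ℝ) (w : E), N₀ (c • w) ≤ (‖c‖₊ : ℝ≥0∞) * N₀ w := fun c w => hIB₀.2.2.1 c w
  have hom₁ : ∀ (c : ℝ) (w : E), N₁ (c • w) ≤ (‖c‖₊ : ℝ≥0∞) * N₁ w := fun c w => hIB₁.2.2.1 c w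
  -- entrywise bounds on the representation
  have hx₀ : ∀ k : ℤ, N₀ (xv k) ≤ ((r₀ ^ (-k) : ℝ≥0) : ℝ≥0∞) * M₀ := by
    intro k
    have h1 : xv k = a₀^(-k) • (a₀^k • xv k) := by
      rw [smul_smul, ← zpow_add₀ (Real.exp_ne_zero _), neg_add_cancel, zpow_zero, one_smul]
    calc N₀ (xv k) = N₀ (a₀^(-k) • (a₀^k • xv k)) := by rw [← h1]
      _ ≤ (‖a₀^(-k)‖₊ : ℝ≥0∞) * N₀ (a₀^k • xv k) := hom₀ _ _
      _ ≤ ((r₀ ^ (-k) : ℝ≥0) : ℝ≥0∞) * M₀ := by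
          refine mul_le_mul' (le_of_eq ?_) (S₀.coord (fun k => a₀^k • xv k) k)
          rw [nnnorm_zpow]
  have ha₁inv : (‖a₁‖₊ : ℝ≥0) = r₁⁻¹ := by
    have h2 : a₁ = (Real.exp (θ-1))⁻¹ := by
      rw [ha₁def, ← Real.exp_neg, neg_sub]
    rw [h2, nnnorm_inv, hr₁def]
  have hx₁ : ∀ k : ℤ, N₁ (xv k) ≤ ((r₁ ^ k : ℝ≥0) : ℝ≥0∞) * M₁ := by
    intro k
    have h1 : xv k = a₁^(-k) • (a₁^k • xv k) := by
      rw [smul_smul, ← zpow_add₀ (Real.exp_ne_zero _), neg_add_cancel, zpow_zero, one_smul]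
    calc N₁ (xv k) = N₁ (a₁^(-k) • (a₁^k • xv k)) := by rw [← h1]
      _ ≤ (‖a₁^(-k)‖₊ : ℝ≥0∞) * N₁ (a₁^k • xv k) := hom₁ _ _
      _ ≤ ((r₁ ^ k : ℝ≥0) : ℝ≥0∞) * M₁ := by
          refine mul_le_mul' (le_of_eq ?_) (S₁.coord (fun k => a₁^k • xv k) k)
          rw [nnnorm_zpow, ha₁inv, inv_zpow', neg_neg]
  -- construction of the tails A m = "∑_{k ≤ m} xv k" and B m = "∑_{k > m} xv k"
  have hAex : ∀ m : ℤ, ∃ Am : E,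
      N₀ Am ≤ ((r₀ ^ (-m) : ℝ≥0) : ℝ≥0∞) * M₀ * (1 - (r₀:ℝ≥0∞))⁻¹ ∧
      Tendsto (fun J : ℕ => ∑ k ∈ Finset.Ioc (m - (J:ℤ)) m, xv k) atTop (𝓝 Am) :=
    fun m => tails hIB₀ hb₀ xv hr₀0 hr₀1 hM₀ hx₀ m
  choose A hAbd hAtd using hAex
  have hBex : ∀ m : ℤ, ∃ Bm : E,
      N₁ Bm ≤ ((r₁ ^ (m+1) : ℝ≥0) : ℝ≥0∞) * M₁ * (1 - (r₁:ℝ≥0∞))⁻¹ ∧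
      Tendsto (fun J : ℕ => ∑ k ∈ Finset.Ioc m (m + (J:ℤ)), xv k) atTop (𝓝 Bm) := by
    intro m
    obtain ⟨Bm, h1, h2⟩ := tails hIB₁ hb₁ (fun k => xv (-k)) hr₁0 hr₁1 hM₁
      (fun k => by simpa using hx₁ (-k)) (-m-1)
    refine ⟨Bm, by rwa [show -(-m-1) = m+1 by ring] at h1, ?_⟩
    refine h2.congr fun J => ?_
    rw [sum_Ioc_neg xv (-m-1 - (J:ℤ)) (-m-1)]
    congr 1 <;> ring
  choose B hBbd hBtd using hBex
  -- the splitting identities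
  have hAB : ∀ m : ℤ, A m + B m = x := by
    intro m
    have h1 : Tendsto (fun J : ℕ => (∑ k ∈ Finset.Ioc (m - (J:ℤ)) m, xv k) +
        ∑ k ∈ Finset.Ioc m (m + (J:ℤ)), xv k) atTop (𝓝 (A m + B m)) := (hAtd m).add (hBtd m)
    have h2 : Tendsto (fun J : ℕ => ∑ k ∈ Finset.Ioc (m - (J:ℤ)) (m + (J:ℤ)), xv k)
        atTop (𝓝 (A m + B m)) := h1.congr fun J => sum_Ioc_glue xv (by omega) (by omega)
    have hmono : Monotone (fun J : ℕ => Finset.Ioc (m - (J:ℤ)) (m + (J:ℤ))) := by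
      intro J J' h
      have h' : (J:ℤ) ≤ (J':ℤ) := by exact_mod_cast h
      exact Finset.Ioc_subset_Ioc (by omega) (by omega)
    have hexh : ∀ k : ℤ, ∃ J : ℕ, k ∈ Finset.Ioc (m - (J:ℤ)) (m + (J:ℤ)) := by
      intro k
      refine ⟨(k - m).natAbs + (m - k).natAbs + 1, ?_⟩
      simp only [Finset.mem_Ioc]
      omega
    have h3 : Tendsto (fun J : ℕ => ∑ k ∈ Finset.Ioc (m - (J:ℤ)) (m + (J:ℤ)), xv k)
        atTop (𝓝 x) := hxv.comp (tendsto_atTop_finset_of_monotone hmono hexh)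
    exact tendsto_nhds_unique h2 h3
  have hAstep : ∀ m₁ m₂ : ℤ, m₁ ≤ m₂ → A m₂ = A m₁ + ∑ k ∈ Finset.Ioc m₁ m₂, xv k := by
    intro m₁ m₂ h
    set d : ℕ := (m₂ - m₁).toNat with hd
    have h1 : Tendsto (fun J : ℕ => (∑ k ∈ Finset.Ioc (m₁ - (J:ℤ)) m₁, xv k) +
        ∑ k ∈ Finset.Ioc m₁ m₂, xv k) atTop
        (𝓝 (A m₁ + ∑ k ∈ Finset.Ioc m₁ m₂, xv k)) :=
      (hAtd m₁).add tendsto_const_nhds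
    have h2 : Tendsto (fun J : ℕ => ∑ k ∈ Finset.Ioc (m₁ - (J:ℤ)) m₂, xv k)
        atTop (𝓝 (A m₁ + ∑ k ∈ Finset.Ioc m₁ m₂, xv k)) :=
      h1.congr fun J => sum_Ioc_glue xv (by omega) h
    have h3 : Tendsto (fun J : ℕ => ∑ k ∈ Finset.Ioc (m₂ - ((J + d : ℕ):ℤ)) m₂, xv k)
        atTop (𝓝 (A m₂)) := (hAtd m₂).comp (tendsto_add_atTop_nat d)
    have h4 : Tendsto (fun J : ℕ => ∑ k ∈ Finset.Ioc (m₁ - (J:ℤ)) m₂, xv k)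
        atTop (𝓝 (A m₂)) := by
      refine h3.congr fun J => ?_
      rw [show m₂ - ((J + d : ℕ):ℤ) = m₁ - (J:ℤ) by push_cast [hd]; omega]
    exact tendsto_nhds_unique h4 h2
  have hBx : ∀ m : ℤ, B m = x - A m := fun m => eq_sub_of_add_eq' (hAB m)
  have hAx : ∀ m : ℤ, A m = x - B m := fun m => eq_sub_of_add_eq (hAB m)
  -- finiteness
  have hNx₀ : N₀ x ≠ ∞ := by
    intro h
    exact hDfin x hxD (by simp [enInter, h])
  have hNx₁ : N₁ x ≠ ∞ := by
    intro h
    exact hDfin x hxD (by simp [enInter, h])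
  have hxvfin₀ : ∀ k, N₀ (xv k) ≠ ∞ :=
    fun k => ne_top_of_le_ne_top (ENNReal.mul_ne_top ENNReal.coe_ne_top hM₀) (hx₀ k)
  have hxvfin₁ : ∀ k, N₁ (xv k) ≠ ∞ :=
    fun k => ne_top_of_le_ne_top (ENNReal.mul_ne_top ENNReal.coe_ne_top hM₁) (hx₁ k)
  have hAfin₀ : ∀ m, N₀ (A m) ≠ ∞ := fun m =>
    ne_top_of_le_ne_top (ENNReal.mul_ne_top (ENNReal.mul_ne_top ENNReal.coe_ne_top hM₀)
      hc₀top) (hAbd m)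
  have hBfin₁ : ∀ m, N₁ (B m) ≠ ∞ := fun m =>
    ne_top_of_le_ne_top (ENNReal.mul_ne_top (ENNReal.mul_ne_top ENNReal.coe_ne_top hM₁)
      hc₁top) (hBbd m)
  have hBfin₀ : ∀ m, N₀ (B m) ≠ ∞ := by
    intro m
    rw [hBx m]
    exact ne_top_of_le_ne_top (ENNReal.add_ne_top.2 ⟨hNx₀, hAfin₀ m⟩) (ibn_sub hIB₀ x (A m))
  have hAfin₁ : ∀ m, N₁ (A m) ≠ ∞ := by
    intro m
    rw [hAx m]
    exact ne_top_of_le_ne_top (ENNReal.add_ne_top.2 ⟨hNx₁, hBfin₁ m⟩) (ibn_sub hIB₁ x (B m))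
  -- the finite-rank approximant y
  set s : Finset ℤ := Finset.Icc (-(n:ℤ)) (n:ℤ) with hsdef
  set u : ℤ → E := fun j => if j ∈ Finset.Icc (0:ℤ) (n:ℤ) then cn' • B j else 0 with hudef
  set v : ℤ → E := fun j => if j ∈ Finset.Icc (-(n:ℤ)) (0:ℤ) then cn' • A (j-1) else 0 with hvdef
  set y : ℤ → E := fun j => cesaro ℝ n xv j + u j + v j with hydef
  have hcesz : ∀ j ∉ s, cesaro ℝ n xv j = 0 := by
    intro j hj
    rw [hsdef, Finset.mem_Icc] at hj
    simp only [cesaro]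
    rw [Finset.sum_eq_zero, smul_zero]
    intro m hm
    rw [Finset.mem_range] at hm
    rw [if_neg]
    rw [abs_le]
    omega
  have hyzero : ∀ j ∉ s, y j = 0 := by
    intro j hj
    have hj' := hj
    rw [hsdef, Finset.mem_Icc] at hj'
    simp only [hydef, hudef, hvdef]
    rw [hcesz j hj, if_neg (by rw [Finset.mem_Icc]; omega),
      if_neg (by rw [Finset.mem_Icc]; omega)]
    simp
  have hIccIoc : ∀ m : ℕ, Finset.Icc (-(m:ℤ)) (m:ℤ) = Finset.Ioc (-(m:ℤ)-1) (m:ℤ) := by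
    intro m; ext j; simp only [Finset.mem_Icc, Finset.mem_Ioc]; omega
  have hPmx : ∀ m : ℕ,
      (∑ k ∈ Finset.Icc (-(m:ℤ)) (m:ℤ), xv k) + B (m:ℤ) + A (-(m:ℤ)-1) = x := by
    intro m
    have h1 : A (-(m:ℤ)-1) + (∑ k ∈ Finset.Icc (-(m:ℤ)) (m:ℤ), xv k) + B (m:ℤ) = x := by
      rw [hIccIoc m, ← hAstep (-(m:ℤ)-1) (m:ℤ) (by omega)]
      exact hAB m
    rw [← h1]; abel
  have hysum : ∑ j ∈ s, y j = x := by
    have hsplit : ∑ j ∈ s, y j =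
        ((∑ j ∈ s, cesaro ℝ n xv j) + (∑ j ∈ s, u j)) + (∑ j ∈ s, v j) := by
      simp only [hydef]
      rw [Finset.sum_add_distrib, Finset.sum_add_distrib]
    have hcsum : ∑ j ∈ s, cesaro ℝ n xv j =
        cn' • ∑ m ∈ Finset.range (n+1), ∑ k ∈ Finset.Icc (-(m:ℤ)) (m:ℤ), xv k := by
      simp only [cesaro]
      rw [← Finset.smul_sum]
      congr 1
      rw [Finset.sum_comm]
      refine Finset.sum_congr rfl fun m hm => ?_
      rw [Finset.mem_range] at hm
      rw [← Finset.sum_filter]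
      congr 1
      ext j
      simp only [Finset.mem_filter, Finset.mem_Icc, hsdef, abs_le]
      omega
    have husum : ∑ j ∈ s, u j = cn' • ∑ m ∈ Finset.range (n+1), B (m:ℤ) := by
      have h1 : ∑ j ∈ s, u j = ∑ j ∈ Finset.Icc (0:ℤ) (n:ℤ), u j := by
        refine (Finset.sum_subset ?_ ?_).symm
        · intro j hj; rw [Finset.mem_Icc] at hj; rw [hsdef, Finset.mem_Icc]; omega
        · intro j _ hj; simp only [hudef]; rw [if_neg hj]
      rw [h1, sum_bIcc u n, Finset.smul_sum]
      refine Finset.sum_congr rfl fun i hi => ?_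
      rw [Finset.mem_range] at hi
      simp only [hudef]
      rw [if_pos (by rw [Finset.mem_Icc]; omega)]
    have hvsum : ∑ j ∈ s, v j = cn' • ∑ m ∈ Finset.range (n+1), A (-(m:ℤ)-1) := by
      have h1 : ∑ j ∈ s, v j = ∑ j ∈ Finset.Icc (-(n:ℤ)) (0:ℤ), v j := by
        refine (Finset.sum_subset ?_ ?_).symm
        · intro j hj; rw [Finset.mem_Icc] at hj; rw [hsdef, Finset.mem_Icc]; omega
        · intro j _ hj; simp only [hvdef]; rw [if_neg hj]
      rw [h1, sum_bIccNeg v n, Finset.smul_sum]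
      refine Finset.sum_congr rfl fun i hi => ?_
      rw [Finset.mem_range] at hi
      simp only [hvdef]
      rw [if_pos (by rw [Finset.mem_Icc]; omega)]
    rw [hsplit, hcsum, husum, hvsum, ← smul_add, ← smul_add, ← Finset.sum_add_distrib,
      ← Finset.sum_add_distrib]
    have hxconst : ∑ m ∈ Finset.range (n+1),
        ((∑ k ∈ Finset.Icc (-(m:ℤ)) (m:ℤ), xv k) + B (m:ℤ) + A (-(m:ℤ)-1)) =
        (n+1) • x := by
      rw [Finset.sum_congr rfl fun m _ => hPmx m, Finset.sum_const, Finset.card_range]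
    rw [hxconst, ← Nat.cast_smul_eq_nsmul ℝ, smul_smul]
    have : cn' * ((n+1 : ℕ) : ℝ) = 1 := by
      rw [hcn'def]
      push_cast
      rw [inv_mul_cancel₀ (by positivity)]
    rw [this, one_smul]
  -- weight bookkeeping
  have hprod₀ : ∀ j j' : ℤ, ((r₀^j:ℝ≥0):ℝ≥0∞) * ((r₀^j':ℝ≥0):ℝ≥0∞) = ((r₀^(j+j'):ℝ≥0):ℝ≥0∞) := by
    intro j j'; rw [← ENNReal.coe_mul, ← zpow_add₀ hr₀0]
  have hprod₁ : ∀ j j' : ℤ, ((r₁^j:ℝ≥0):ℝ≥0∞) * ((r₁^j':ℝ≥0):ℝ≥0∞) = ((r₁^(j+j'):ℝ≥0):ℝ≥0∞) := by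
    intro j j'; rw [← ENNReal.coe_mul, ← zpow_add₀ hr₁0]
  have hr₀le1 : ∀ j : ℤ, 0 ≤ j → ((r₀^j:ℝ≥0):ℝ≥0∞) ≤ 1 := by
    intro j hj
    lift j to ℕ using hj
    rw [zpow_natCast, ENNReal.coe_pow]
    exact pow_le_one' hr₀1.le j
  have hr₁le1 : ∀ j : ℤ, 0 ≤ j → ((r₁^j:ℝ≥0):ℝ≥0∞) ≤ 1 := by
    intro j hj
    lift j to ℕ using hj
    rw [zpow_natCast, ENNReal.coe_pow]
    exact pow_le_one' hr₁1.le j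
  have hnncn : (‖cn'‖₊ : ℝ≥0∞) = cn := by
    have h1 : ((n:ℝ)+1) = ((n+1:ℕ):ℝ) := by push_cast; ring
    rw [hcn'def, h1, nnnorm_inv, Real.nnnorm_natCast, ENNReal.coe_inv (by positivity),
      ENNReal.coe_natCast, hcndef]
    congr 1
    push_cast
    ring
  have hn1ne0 : ((n:ℝ≥0∞)+1) ≠ 0 := by
    simp
  have hn1netop : ((n:ℝ≥0∞)+1) ≠ ∞ := by
    simp [ENNReal.add_ne_top]
  have hncn_cancel : ((n+1:ℕ):ℝ≥0∞) * cn = 1 := by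
    rw [hcndef]
    rw [show ((n+1:ℕ):ℝ≥0∞) = (n:ℝ≥0∞)+1 by push_cast; ring]
    exact ENNReal.mul_inv_cancel hn1ne0 hn1netop
  have hwm₀ : ∀ (j:ℤ) (w : E), N₀ (a₀^j • w) ≤ ((r₀^j:ℝ≥0):ℝ≥0∞) * N₀ w := by
    intro j w
    refine (hom₀ _ _).trans (le_of_eq ?_)
    rw [nnnorm_zpow]
  have hwm₁ : ∀ (j:ℤ) (w : E), N₁ (a₁^j • w) ≤ ((r₁^(-j):ℝ≥0):ℝ≥0∞) * N₁ w := by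
    intro j w
    refine (hom₁ _ _).trans (le_of_eq ?_)
    rw [nnnorm_zpow, ha₁inv, inv_zpow']
  have hgeom₀ : ∑ j ∈ Finset.Icc (0:ℤ) (n:ℤ), ((r₀^j:ℝ≥0):ℝ≥0∞) ≤ c₀ := by
    rw [sum_bIcc (fun j => ((r₀^j:ℝ≥0):ℝ≥0∞)) n]
    rw [Finset.sum_congr rfl fun i _ => (by rw [zpow_natCast, ENNReal.coe_pow] :
      ((r₀^((i:ℕ):ℤ):ℝ≥0):ℝ≥0∞) = ((r₀:ℝ≥0∞))^(i:ℕ))]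
    exact geom_range_le _ _
  have hgeom₁ : ∑ j ∈ Finset.Icc (-(n:ℤ)) (0:ℤ), ((r₁^(-j):ℝ≥0):ℝ≥0∞) ≤ c₁ := by
    rw [sum_bIccNeg (fun j => ((r₁^(-j):ℝ≥0):ℝ≥0∞)) n]
    rw [Finset.sum_congr rfl fun i _ => (by rw [neg_neg, zpow_natCast, ENNReal.coe_pow] :
      ((r₁^(-(-(i:ℕ):ℤ)):ℝ≥0):ℝ≥0∞) = ((r₁:ℝ≥0∞))^(i:ℕ))]
    exact geom_range_le _ _
  have hcardIcc0n : (Finset.Icc (0:ℤ) (n:ℤ)).card = n+1 := by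
    rw [Int.card_Icc]
    omega
  have hcardIccn0 : (Finset.Icc (-(n:ℤ)) (0:ℤ)).card = n+1 := by
    rw [Int.card_Icc]
    omega
  -- the four norm estimates for u and v
  have hu₀ : S₀.toFun (fun k => a₀^k • u k) ≤ cn * (c₀ * N₀ x) + c₀ * M₀ := by
    have hsupp : ∀ j ∉ Finset.Icc (0:ℤ) (n:ℤ), a₀^j • u j = 0 := by
      intro j hj; simp only [hudef]; rw [if_neg hj, smul_zero]
    refine (seq_le_sum S₀ _ _ hsupp).trans ?_
    have hterm : ∀ j ∈ Finset.Icc (0:ℤ) (n:ℤ),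
        N₀ (a₀^j • u j) ≤ cn * (((r₀^j:ℝ≥0):ℝ≥0∞) * N₀ x) + cn * (M₀ * c₀) := by
      intro j hj
      simp only [hudef]
      rw [if_pos hj, smul_smul]
      calc N₀ ((a₀^j * cn') • B j) ≤ (‖a₀^j * cn'‖₊ : ℝ≥0∞) * N₀ (B j) := hom₀ _ _
        _ = ((r₀^j:ℝ≥0):ℝ≥0∞) * cn * N₀ (B j) := by
            rw [nnnorm_mul, ENNReal.coe_mul, nnnorm_zpow, hnncn]
        _ ≤ ((r₀^j:ℝ≥0):ℝ≥0∞) * cn *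
              (N₀ x + ((r₀^(-j):ℝ≥0):ℝ≥0∞) * M₀ * (1 - (r₀:ℝ≥0∞))⁻¹) := by
            refine mul_le_mul' le_rfl ?_
            rw [hBx j]
            exact (ibn_sub hIB₀ x (A j)).trans (add_le_add le_rfl (hAbd j))
        _ = cn * (((r₀^j:ℝ≥0):ℝ≥0∞) * N₀ x) +
              cn * ((((r₀^j:ℝ≥0):ℝ≥0∞) * ((r₀^(-j):ℝ≥0):ℝ≥0∞)) * (M₀ * (1-(r₀:ℝ≥0∞))⁻¹)) := by
            ring
        _ ≤ cn * (((r₀^j:ℝ≥0):ℝ≥0∞) * N₀ x) + cn * (M₀ * c₀) := by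
            refine add_le_add le_rfl (mul_le_mul' le_rfl ?_)
            rw [hprod₀ j (-j), add_neg_cancel, zpow_zero, ENNReal.coe_one, one_mul, ← hc₀def]
    refine (Finset.sum_le_sum hterm).trans ?_
    rw [Finset.sum_add_distrib]
    refine add_le_add ?_ ?_
    · rw [← Finset.mul_sum]
      refine mul_le_mul' le_rfl ?_
      rw [← Finset.sum_mul]
      exact mul_le_mul' hgeom₀ le_rfl
    · rw [Finset.sum_const, hcardIcc0n, nsmul_eq_mul]
      calc ((n+1:ℕ):ℝ≥0∞) * (cn * (M₀ * c₀)) = (((n+1:ℕ):ℝ≥0∞) * cn) * (M₀*c₀) := by ring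
        _ = M₀ * c₀ := by rw [hncn_cancel, one_mul]
        _ ≤ c₀ * M₀ := le_of_eq (mul_comm _ _)
  have hv₀ : S₀.toFun (fun k => a₀^k • v k) ≤ c₀ * M₀ := by
    have hsupp : ∀ j ∉ Finset.Icc (-(n:ℤ)) (0:ℤ), a₀^j • v j = 0 := by
      intro j hj; simp only [hvdef]; rw [if_neg hj, smul_zero]
    refine (seq_le_sum S₀ _ _ hsupp).trans ?_
    have hterm : ∀ j ∈ Finset.Icc (-(n:ℤ)) (0:ℤ),
        N₀ (a₀^j • v j) ≤ cn * (M₀ * c₀) := by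
      intro j hj
      simp only [hvdef]
      rw [if_pos hj, smul_smul]
      calc N₀ ((a₀^j * cn') • A (j-1)) ≤ (‖a₀^j * cn'‖₊ : ℝ≥0∞) * N₀ (A (j-1)) := hom₀ _ _
        _ = ((r₀^j:ℝ≥0):ℝ≥0∞) * cn * N₀ (A (j-1)) := by
            rw [nnnorm_mul, ENNReal.coe_mul, nnnorm_zpow, hnncn]
        _ ≤ ((r₀^j:ℝ≥0):ℝ≥0∞) * cn * (((r₀^(-(j-1)):ℝ≥0):ℝ≥0∞) * M₀ * (1-(r₀:ℝ≥0∞))⁻¹) :=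
            mul_le_mul' le_rfl (hAbd (j-1))
        _ = (((r₀^j:ℝ≥0):ℝ≥0∞) * ((r₀^(-(j-1)):ℝ≥0):ℝ≥0∞)) * (cn * (M₀ * (1-(r₀:ℝ≥0∞))⁻¹)) := by
            ring
        _ ≤ cn * (M₀ * c₀) := by
            rw [hprod₀ j (-(j-1)), ← hc₀def]
            refine le_trans (mul_le_mul' (hr₀le1 _ (by omega)) le_rfl) ?_
            rw [one_mul]
    refine (Finset.sum_le_sum hterm).trans ?_
    rw [Finset.sum_const, hcardIccn0, nsmul_eq_mul]
    calc ((n+1:ℕ):ℝ≥0∞) * (cn * (M₀ * c₀)) = (((n+1:ℕ):ℝ≥0∞) * cn) * (M₀*c₀) := by ring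
      _ = M₀ * c₀ := by rw [hncn_cancel, one_mul]
      _ ≤ c₀ * M₀ := le_of_eq (mul_comm _ _)
  have hu₁ : S₁.toFun (fun k => a₁^k • u k) ≤ c₁ * M₁ := by
    have hsupp : ∀ j ∉ Finset.Icc (0:ℤ) (n:ℤ), a₁^j • u j = 0 := by
      intro j hj; simp only [hudef]; rw [if_neg hj, smul_zero]
    refine (seq_le_sum S₁ _ _ hsupp).trans ?_
    have hterm : ∀ j ∈ Finset.Icc (0:ℤ) (n:ℤ),
        N₁ (a₁^j • u j) ≤ cn * (M₁ * c₁) := by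
      intro j hj
      simp only [hudef]
      rw [if_pos hj, smul_smul]
      calc N₁ ((a₁^j * cn') • B j) ≤ (‖a₁^j * cn'‖₊ : ℝ≥0∞) * N₁ (B j) := hom₁ _ _
        _ = ((r₁^(-j):ℝ≥0):ℝ≥0∞) * cn * N₁ (B j) := by
            rw [nnnorm_mul, ENNReal.coe_mul, nnnorm_zpow, ha₁inv, inv_zpow', hnncn]
        _ ≤ ((r₁^(-j):ℝ≥0):ℝ≥0∞) * cn * (((r₁^(j+1):ℝ≥0):ℝ≥0∞) * M₁ * (1-(r₁:ℝ≥0∞))⁻¹) :=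
            mul_le_mul' le_rfl (hBbd j)
        _ = (((r₁^(-j):ℝ≥0):ℝ≥0∞) * ((r₁^(j+1):ℝ≥0):ℝ≥0∞)) * (cn * (M₁ * (1-(r₁:ℝ≥0∞))⁻¹)) := by
            ring
        _ ≤ cn * (M₁ * c₁) := by
            rw [hprod₁ (-j) (j+1), ← hc₁def]
            refine le_trans (mul_le_mul' (hr₁le1 _ (by omega)) le_rfl) ?_
            rw [one_mul]
    refine (Finset.sum_le_sum hterm).trans ?_
    rw [Finset.sum_const, hcardIcc0n, nsmul_eq_mul]
    calc ((n+1:ℕ):ℝ≥0∞) * (cn * (M₁ * c₁)) = (((n+1:ℕ):ℝ≥0∞) * cn) * (M₁*c₁) := by ring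
      _ = M₁ * c₁ := by rw [hncn_cancel, one_mul]
      _ ≤ c₁ * M₁ := le_of_eq (mul_comm _ _)
  have hv₁ : S₁.toFun (fun k => a₁^k • v k) ≤ cn * (c₁ * N₁ x) + c₁ * M₁ := by
    have hsupp : ∀ j ∉ Finset.Icc (-(n:ℤ)) (0:ℤ), a₁^j • v j = 0 := by
      intro j hj; simp only [hvdef]; rw [if_neg hj, smul_zero]
    refine (seq_le_sum S₁ _ _ hsupp).trans ?_
    have hterm : ∀ j ∈ Finset.Icc (-(n:ℤ)) (0:ℤ),
        N₁ (a₁^j • v j) ≤ cn * (((r₁^(-j):ℝ≥0):ℝ≥0∞) * N₁ x) + cn * (M₁ * c₁) := by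
      intro j hj
      simp only [hvdef]
      rw [if_pos hj, smul_smul]
      calc N₁ ((a₁^j * cn') • A (j-1)) ≤ (‖a₁^j * cn'‖₊ : ℝ≥0∞) * N₁ (A (j-1)) := hom₁ _ _
        _ = ((r₁^(-j):ℝ≥0):ℝ≥0∞) * cn * N₁ (A (j-1)) := by
            rw [nnnorm_mul, ENNReal.coe_mul, nnnorm_zpow, ha₁inv, inv_zpow', hnncn]
        _ ≤ ((r₁^(-j):ℝ≥0):ℝ≥0∞) * cn *
              (N₁ x + ((r₁^((j-1)+1):ℝ≥0):ℝ≥0∞) * M₁ * (1-(r₁:ℝ≥0∞))⁻¹) := by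
            refine mul_le_mul' le_rfl ?_
            rw [hAx (j-1)]
            exact (ibn_sub hIB₁ x (B (j-1))).trans (add_le_add le_rfl (hBbd (j-1)))
        _ = cn * (((r₁^(-j):ℝ≥0):ℝ≥0∞) * N₁ x) +
              cn * ((((r₁^(-j):ℝ≥0):ℝ≥0∞) * ((r₁^((j-1)+1):ℝ≥0):ℝ≥0∞)) *
                (M₁ * (1-(r₁:ℝ≥0∞))⁻¹)) := by
            ring
        _ ≤ cn * (((r₁^(-j):ℝ≥0):ℝ≥0∞) * N₁ x) + cn * (M₁ * c₁) := by
            refine add_le_add le_rfl (mul_le_mul' le_rfl ?_)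
            rw [hprod₁ (-j) ((j-1)+1), show -j + ((j-1)+1) = 0 by ring, zpow_zero,
              ENNReal.coe_one, one_mul, ← hc₁def]
    refine (Finset.sum_le_sum hterm).trans ?_
    rw [Finset.sum_add_distrib]
    refine add_le_add ?_ ?_
    · rw [← Finset.mul_sum]
      refine mul_le_mul' le_rfl ?_
      rw [← Finset.sum_mul]
      exact mul_le_mul' hgeom₁ le_rfl
    · rw [Finset.sum_const, hcardIccn0, nsmul_eq_mul]
      calc ((n+1:ℕ):ℝ≥0∞) * (cn * (M₁ * c₁)) = (((n+1:ℕ):ℝ≥0∞) * cn) * (M₁*c₁) := by ring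
        _ = M₁ * c₁ := by rw [hncn_cancel, one_mul]
        _ ≤ c₁ * M₁ := le_of_eq (mul_comm _ _)
  -- assembled bounds for y
  have hwt₀y : wtSeq a₀ S₀.toFun y ≤ (1 + 2*c₀) * M₀ + cn * (c₀ * N₀ x) := by
    have hsplit : (fun k => a₀^k • y k) = (fun k => a₀^k • cesaro ℝ n xv k) +
        ((fun k => a₀^k • u k) + (fun k => a₀^k • v k)) := by
      funext k
      simp only [hydef, Pi.add_apply, smul_add, add_assoc]
    calc wtSeq a₀ S₀.toFun y = S₀.toFun (fun k => a₀^k • y k) := rfl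
      _ ≤ S₀.toFun (fun k => a₀^k • cesaro ℝ n xv k) +
          S₀.toFun ((fun k => a₀^k • u k) + (fun k => a₀^k • v k)) := by
          rw [hsplit]
          exact S₀.isBanachENorm.2.1 _ _
      _ ≤ M₀ + (S₀.toFun (fun k => a₀^k • u k) + S₀.toFun (fun k => a₀^k • v k)) :=
          add_le_add (wt_cesaro_le hS₀ a₀ n xv) (S₀.isBanachENorm.2.1 _ _)
      _ ≤ M₀ + ((cn * (c₀ * N₀ x) + c₀ * M₀) + c₀ * M₀) :=
          add_le_add le_rfl (add_le_add hu₀ hv₀)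
      _ = (1 + 2*c₀) * M₀ + cn * (c₀ * N₀ x) := by ring
  have hwt₁y : wtSeq a₁ S₁.toFun y ≤ (1 + 2*c₁) * M₁ + cn * (c₁ * N₁ x) := by
    have hsplit : (fun k => a₁^k • y k) = (fun k => a₁^k • cesaro ℝ n xv k) +
        ((fun k => a₁^k • u k) + (fun k => a₁^k • v k)) := by
      funext k
      simp only [hydef, Pi.add_apply, smul_add, add_assoc]
    calc wtSeq a₁ S₁.toFun y = S₁.toFun (fun k => a₁^k • y k) := rfl
      _ ≤ S₁.toFun (fun k => a₁^k • cesaro ℝ n xv k) +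
          S₁.toFun ((fun k => a₁^k • u k) + (fun k => a₁^k • v k)) := by
          rw [hsplit]
          exact S₁.isBanachENorm.2.1 _ _
      _ ≤ M₁ + (S₁.toFun (fun k => a₁^k • u k) + S₁.toFun (fun k => a₁^k • v k)) :=
          add_le_add (wt_cesaro_le hS₁ a₁ n xv) (S₁.isBanachENorm.2.1 _ _)
      _ ≤ M₁ + ((c₁ * M₁) + (cn * (c₁ * N₁ x) + c₁ * M₁)) :=
          add_le_add le_rfl (add_le_add hu₁ hv₁)
      _ = (1 + 2*c₁) * M₁ + cn * (c₁ * N₁ x) := by ring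
  -- entrywise finiteness of y
  have hN₀z : N₀ (0:E) = 0 := ibn_zero hIB₀
  have hN₁z : N₁ (0:E) = 0 := ibn_zero hIB₁
  have hufin₀ : ∀ j, N₀ (u j) ≠ ∞ := by
    intro j
    simp only [hudef]
    split
    · exact ne_top_of_le_ne_top (ENNReal.mul_ne_top ENNReal.coe_ne_top (hBfin₀ j)) (hom₀ _ _)
    · rw [hN₀z]; simp
  have hufin₁ : ∀ j, N₁ (u j) ≠ ∞ := by
    intro j
    simp only [hudef]
    split
    · exact ne_top_of_le_ne_top (ENNReal.mul_ne_top ENNReal.coe_ne_top (hBfin₁ j)) (hom₁ _ _)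
    · rw [hN₁z]; simp
  have hvfin₀ : ∀ j, N₀ (v j) ≠ ∞ := by
    intro j
    simp only [hvdef]
    split
    · exact ne_top_of_le_ne_top (ENNReal.mul_ne_top ENNReal.coe_ne_top (hAfin₀ (j-1))) (hom₀ _ _)
    · rw [hN₀z]; simp
  have hvfin₁ : ∀ j, N₁ (v j) ≠ ∞ := by
    intro j
    simp only [hvdef]
    split
    · exact ne_top_of_le_ne_top (ENNReal.mul_ne_top ENNReal.coe_ne_top (hAfin₁ (j-1))) (hom₁ _ _)
    · rw [hN₁z]; simp
  have hcesfin₀ : ∀ j, N₀ (cesaro ℝ n xv j) ≠ ∞ := by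
    intro j
    have h1 : N₀ (cesaro ℝ n xv j) ≤ (‖((n:ℝ)+1)⁻¹‖₊ : ℝ≥0∞) *
        ∑ m ∈ Finset.range (n+1), N₀ (if |j| ≤ (m:ℤ) then xv j else 0) := by
      simp only [cesaro]
      exact (hom₀ _ _).trans (mul_le_mul' le_rfl (ibn_sum_le hIB₀ _ _))
    refine ne_top_of_le_ne_top (ENNReal.mul_ne_top ENNReal.coe_ne_top ?_) h1
    rw [← lt_top_iff_ne_top]
    refine ENNReal.sum_lt_top.mpr fun m _ => ?_
    rw [lt_top_iff_ne_top]
    split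
    · exact hxvfin₀ j
    · rw [hN₀z]; simp
  have hcesfin₁ : ∀ j, N₁ (cesaro ℝ n xv j) ≠ ∞ := by
    intro j
    have h1 : N₁ (cesaro ℝ n xv j) ≤ (‖((n:ℝ)+1)⁻¹‖₊ : ℝ≥0∞) *
        ∑ m ∈ Finset.range (n+1), N₁ (if |j| ≤ (m:ℤ) then xv j else 0) := by
      simp only [cesaro]
      exact (hom₁ _ _).trans (mul_le_mul' le_rfl (ibn_sum_le hIB₁ _ _))
    refine ne_top_of_le_ne_top (ENNReal.mul_ne_top ENNReal.coe_ne_top ?_) h1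
    rw [← lt_top_iff_ne_top]
    refine ENNReal.sum_lt_top.mpr fun m _ => ?_
    rw [lt_top_iff_ne_top]
    split
    · exact hxvfin₁ j
    · rw [hN₁z]; simp
  have hyfinInter : ∀ j, enInter N₀b.toFun N₁b.toFun (y j) ≠ ∞ := by
    intro j
    have h0 : N₀ (y j) ≠ ∞ := by
      have h1 : N₀ (y j) ≤ (N₀ (cesaro ℝ n xv j) + N₀ (u j)) + N₀ (v j) := by
        simp only [hydef]
        exact (hIB₀.2.1 _ _).trans (add_le_add (hIB₀.2.1 _ _) le_rfl)
      exact ne_top_of_le_ne_top (ENNReal.add_ne_top.2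
        ⟨ENNReal.add_ne_top.2 ⟨hcesfin₀ j, hufin₀ j⟩, hvfin₀ j⟩) h1
    have h1 : N₁ (y j) ≠ ∞ := by
      have h2 : N₁ (y j) ≤ (N₁ (cesaro ℝ n xv j) + N₁ (u j)) + N₁ (v j) := by
        simp only [hydef]
        exact (hIB₁.2.1 _ _).trans (add_le_add (hIB₁.2.1 _ _) le_rfl)
      exact ne_top_of_le_ne_top (ENNReal.add_ne_top.2
        ⟨ENNReal.add_ne_top.2 ⟨hcesfin₁ j, hufin₁ j⟩, hvfin₁ j⟩) h2
    have : max (N₀ (y j)) (N₁ (y j)) < ⊤ :=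
      max_lt (lt_top_iff_ne_top.2 h0) (lt_top_iff_ne_top.2 h1)
    exact this.ne
  -- the tolerances
  set W : ℤ → ℝ≥0∞ := fun j => 1 + ((r₀^j:ℝ≥0):ℝ≥0∞) + ((r₁^(-j):ℝ≥0):ℝ≥0∞) with hWdef
  have hW0 : ∀ j, W j ≠ 0 := by
    intro j
    simp only [hWdef]
    intro h
    rw [add_eq_zero, add_eq_zero] at h
    exact one_ne_zero h.1.1
  have hWtop : ∀ j, W j ≠ ∞ := by
    intro j
    simp only [hWdef]
    exact ENNReal.add_ne_top.2 ⟨ENNReal.add_ne_top.2 ⟨by simp, ENNReal.coe_ne_top⟩,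
      ENNReal.coe_ne_top⟩
  have hle_W₀ : ∀ j, ((r₀^j:ℝ≥0):ℝ≥0∞) ≤ W j := by
    intro j
    simp only [hWdef]
    exact le_trans le_add_self le_self_add
  have hle_W₁ : ∀ j, ((r₁^(-j):ℝ≥0):ℝ≥0∞) ≤ W j := by
    intro j
    simp only [hWdef]
    exact le_add_self
  have hle_W1 : ∀ j, (1:ℝ≥0∞) ≤ W j := by
    intro j
    simp only [hWdef]
    exact le_trans le_self_add le_self_add
  set Wn : ℝ≥0∞ := 2*(n:ℝ≥0∞)+2 with hWndef
  have hWn0 : Wn ≠ 0 := by simp [hWndef]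
  have hWntop : Wn ≠ ∞ := by
    simp only [hWndef]
    exact ENNReal.add_ne_top.2 ⟨ENNReal.mul_ne_top (by simp) (by simp), by simp⟩
  set η : ℤ → ℝ≥0∞ := fun j => (ε/2) * Wn⁻¹ * (W j)⁻¹ with hηdef
  have hε2 : ε/2 ≠ 0 := by
    simp [ENNReal.div_eq_zero_iff, hε.ne']
  have hηpos : ∀ j, 0 < η j := by
    intro j
    simp only [hηdef]
    refine ENNReal.mul_pos (ENNReal.mul_pos hε2 ?_).ne' ?_
    · exact ENNReal.inv_ne_zero.2 hWntop
    · exact ENNReal.inv_ne_zero.2 (hWtop j)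
  have hbase : ∀ j (a : ℝ≥0∞), a ≤ W j → a * η j ≤ (ε/2) * Wn⁻¹ := by
    intro j a ha
    calc a * η j = ((ε/2)*Wn⁻¹) * (a * (W j)⁻¹) := by rw [hηdef]; ring
      _ ≤ ((ε/2)*Wn⁻¹) * (W j * (W j)⁻¹) := by
          exact mul_le_mul' le_rfl (mul_le_mul' ha le_rfl)
      _ = ((ε/2)*Wn⁻¹) * 1 := by rw [ENNReal.mul_inv_cancel (hW0 j) (hWtop j)]
      _ = (ε/2)*Wn⁻¹ := mul_one _
  have hηW₀ : ∀ j, ((r₀^j:ℝ≥0):ℝ≥0∞) * η j ≤ (ε/2) * Wn⁻¹ := fun j => hbase j _ (hle_W₀ j)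
  have hηW₁ : ∀ j, ((r₁^(-j):ℝ≥0):ℝ≥0∞) * η j ≤ (ε/2) * Wn⁻¹ := fun j => hbase j _ (hle_W₁ j)
  have hη1 : ∀ j, η j ≤ (ε/2) * Wn⁻¹ := by
    intro j
    have := hbase j 1 (hle_W1 j)
    rwa [one_mul] at this
  -- choose approximants in D
  have hch : ∀ j : ℤ, ∃ wj : E, wj ∈ D ∧
      (j ∈ s → max (N₀ (y j - wj)) (N₁ (y j - wj)) < η j) := by
    intro j
    by_cases hj : j ∈ s
    · obtain ⟨wj, hwD, hw⟩ := hdense (y j) (hyfinInter j) (η j) (hηpos j)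
      exact ⟨wj, hwD, fun _ => hw⟩
    · exact ⟨0, Submodule.zero_mem D, fun h => absurd h hj⟩
  choose w hwD hwlt using hch
  set corr : E := x - ∑ j ∈ s, w j with hcorrdef
  set z : ℤ → E := fun j => (if j ∈ s then w j else 0) + (if j = (0:ℤ) then corr else 0)
    with hzdef
  have h0s : (0:ℤ) ∈ s := by rw [hsdef, Finset.mem_Icc]; omega
  have hzD : ∀ j, z j ∈ D := by
    intro j
    simp only [hzdef]
    refine Submodule.add_mem D ?_ ?_
    · split
      · exact hwD j
      · exact Submodule.zero_mem D
    · split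
      · exact Submodule.sub_mem D hxD (Submodule.sum_mem D fun j' _ => hwD j')
      · exact Submodule.zero_mem D
  have hzzero : ∀ j ∉ s, z j = 0 := by
    intro j hj
    simp only [hzdef]
    rw [if_neg hj, if_neg (by rintro rfl; exact hj h0s), add_zero]
  have hzsupp : (Function.support z).Finite := by
    refine Set.Finite.subset s.finite_toSet ?_
    intro j hj
    by_contra hjs
    exact hj (hzzero j hjs)
  have hzsub : Function.support z ⊆ ↑s := by
    intro j hj
    by_contra hjs
    exact hj (hzzero j hjs)
  have hzsum : ∑ᶠ j, z j = x := by
    rw [finsum_eq_sum_of_support_subset z hzsub]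
    have h1 : ∑ j ∈ s, z j = (∑ j ∈ s, if j ∈ s then w j else 0) +
        ∑ j ∈ s, (if j = (0:ℤ) then corr else 0) := by
      simp only [hzdef]
      exact Finset.sum_add_distrib
    rw [h1, Finset.sum_ite_mem, Finset.inter_self, Finset.sum_ite_eq' s (0:ℤ) fun _ => corr,
      if_pos h0s, hcorrdef]
    abel
  have hcorr2 : corr = ∑ j ∈ s, (y j - w j) := by
    rw [hcorrdef, ← hysum, ← Finset.sum_sub_distrib]
  -- the difference z - y
  set d : ℤ → E := fun j => z j - y j with hddef
  have hdzero : ∀ j ∉ s, d j = 0 := by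
    intro j hj
    simp only [hddef]
    rw [hzzero j hj, hyzero j hj, sub_zero]
  have hdsub₀ : ∀ j ∈ s, N₀ (d j) ≤ η j + (if j = (0:ℤ) then ∑ j' ∈ s, η j' else 0) := by
    intro j hj
    have hd1 : d j = (w j - y j) + (if j = (0:ℤ) then corr else 0) := by
      simp only [hddef, hzdef]
      rw [if_pos hj]
      abel
    rw [hd1]
    refine (hIB₀.2.1 _ _).trans (add_le_add ?_ ?_)
    · have h2 : w j - y j = -(y j - w j) := by abel
      rw [h2]
      exact (ibn_neg hIB₀ _).trans
        (((le_max_left _ _).trans (hwlt j hj).le))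
    · split
      · rw [hcorr2]
        refine (ibn_sum_le hIB₀ s _).trans (Finset.sum_le_sum fun j' hj' => ?_)
        exact (le_max_left _ _).trans (hwlt j' hj').le
      · exact le_of_eq hN₀z
  have hdsub₁ : ∀ j ∈ s, N₁ (d j) ≤ η j + (if j = (0:ℤ) then ∑ j' ∈ s, η j' else 0) := by
    intro j hj
    have hd1 : d j = (w j - y j) + (if j = (0:ℤ) then corr else 0) := by
      simp only [hddef, hzdef]
      rw [if_pos hj]
      abel
    rw [hd1]
    refine (hIB₁.2.1 _ _).trans (add_le_add ?_ ?_)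
    · have h2 : w j - y j = -(y j - w j) := by abel
      rw [h2]
      exact (ibn_neg hIB₁ _).trans
        (((le_max_right _ _).trans (hwlt j hj).le))
    · split
      · rw [hcorr2]
        refine (ibn_sum_le hIB₁ s _).trans (Finset.sum_le_sum fun j' hj' => ?_)
        exact (le_max_right _ _).trans (hwlt j' hj').le
      · exact le_of_eq hN₁z
  have hscard : s.card = 2*n+1 := by
    rw [hsdef, Int.card_Icc]
    omega
  have hcard_le : ((s.card:ℕ):ℝ≥0∞) ≤ Wn := by
    rw [hscard, hWndef]
    push_cast
    calc 2*(n:ℝ≥0∞)+1 ≤ 2*(n:ℝ≥0∞)+2 := add_le_add le_rfl one_le_two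
      _ = 2*(n:ℝ≥0∞)+2 := rfl
  have hsum_eta : ∑ j' ∈ s, η j' ≤ ε/2 := by
    refine le_trans (Finset.sum_le_card_nsmul s _ _ fun j _ => hη1 j) ?_
    rw [nsmul_eq_mul]
    calc ((s.card:ℕ):ℝ≥0∞) * ((ε/2)*Wn⁻¹) ≤ Wn * ((ε/2)*Wn⁻¹) := mul_le_mul' hcard_le le_rfl
      _ = (ε/2) * (Wn * Wn⁻¹) := by ring
      _ = (ε/2) * 1 := by rw [ENNReal.mul_inv_cancel hWn0 hWntop]
      _ = ε/2 := mul_one _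
  have hdwt : ∀ (T : SeqStructure ℝ E N₀b ⊕ Unit), True := fun _ => trivial
  have hd₀ : S₀.toFun (fun k => a₀^k • d k) ≤ ε := by
    have hsupp : ∀ j ∉ s, a₀^j • d j = 0 := by
      intro j hj
      rw [hdzero j hj, smul_zero]
    refine (seq_le_sum S₀ s _ hsupp).trans ?_
    have hterm : ∀ j ∈ s, N₀ (a₀^j • d j) ≤
        ((r₀^j:ℝ≥0):ℝ≥0∞) * η j + (if j = (0:ℤ) then ((r₀^j:ℝ≥0):ℝ≥0∞) * ∑ j' ∈ s, η j' else 0) := by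
      intro j hj
      refine (hwm₀ j (d j)).trans ?_
      refine le_trans (mul_le_mul' le_rfl (hdsub₀ j hj)) ?_
      rw [mul_add, mul_ite, mul_zero]
    refine (Finset.sum_le_sum hterm).trans ?_
    rw [Finset.sum_add_distrib]
    have hpart1 : ∑ j ∈ s, ((r₀^j:ℝ≥0):ℝ≥0∞) * η j ≤ ε/2 := by
      refine le_trans (Finset.sum_le_card_nsmul s _ _ fun j _ => hηW₀ j) ?_
      rw [nsmul_eq_mul]
      calc ((s.card:ℕ):ℝ≥0∞) * ((ε/2)*Wn⁻¹) ≤ Wn * ((ε/2)*Wn⁻¹) := mul_le_mul' hcard_le le_rfl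
        _ = (ε/2) * (Wn * Wn⁻¹) := by ring
        _ = (ε/2) * 1 := by rw [ENNReal.mul_inv_cancel hWn0 hWntop]
        _ = ε/2 := mul_one _
    have hpart2 : ∑ j ∈ s, (if j = (0:ℤ) then ((r₀^j:ℝ≥0):ℝ≥0∞) * ∑ j' ∈ s, η j' else 0) ≤ ε/2 := by
      rw [Finset.sum_ite_eq' s (0:ℤ) fun j => ((r₀^j:ℝ≥0):ℝ≥0∞) * ∑ j' ∈ s, η j',
        if_pos h0s]
      rw [zpow_zero, ENNReal.coe_one, one_mul]
      exact hsum_eta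
    calc _ ≤ ε/2 + ε/2 := add_le_add hpart1 hpart2
      _ = ε := ENNReal.add_halves ε
  have hd₁ : S₁.toFun (fun k => a₁^k • d k) ≤ ε := by
    have hsupp : ∀ j ∉ s, a₁^j • d j = 0 := by
      intro j hj
      rw [hdzero j hj, smul_zero]
    refine (seq_le_sum S₁ s _ hsupp).trans ?_
    have hterm : ∀ j ∈ s, N₁ (a₁^j • d j) ≤
        ((r₁^(-j):ℝ≥0):ℝ≥0∞) * η j + (if j = (0:ℤ) then ((r₁^(-j):ℝ≥0):ℝ≥0∞) * ∑ j' ∈ s, η j' else 0) := by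
      intro j hj
      refine (hwm₁ j (d j)).trans ?_
      refine le_trans (mul_le_mul' le_rfl (hdsub₁ j hj)) ?_
      rw [mul_add, mul_ite, mul_zero]
    refine (Finset.sum_le_sum hterm).trans ?_
    rw [Finset.sum_add_distrib]
    have hpart1 : ∑ j ∈ s, ((r₁^(-j):ℝ≥0):ℝ≥0∞) * η j ≤ ε/2 := by
      refine le_trans (Finset.sum_le_card_nsmul s _ _ fun j _ => hηW₁ j) ?_
      rw [nsmul_eq_mul]
      calc ((s.card:ℕ):ℝ≥0∞) * ((ε/2)*Wn⁻¹) ≤ Wn * ((ε/2)*Wn⁻¹) := mul_le_mul' hcard_le le_rfl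
        _ = (ε/2) * (Wn * Wn⁻¹) := by ring
        _ = (ε/2) * 1 := by rw [ENNReal.mul_inv_cancel hWn0 hWntop]
        _ = ε/2 := mul_one _
    have hpart2 : ∑ j ∈ s, (if j = (0:ℤ) then ((r₁^(-j):ℝ≥0):ℝ≥0∞) * ∑ j' ∈ s, η j' else 0) ≤ ε/2 := by
      rw [Finset.sum_ite_eq' s (0:ℤ) fun j => ((r₁^(-j):ℝ≥0):ℝ≥0∞) * ∑ j' ∈ s, η j',
        if_pos h0s]
      rw [neg_zero, zpow_zero, ENNReal.coe_one, one_mul]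
      exact hsum_eta
    calc _ ≤ ε/2 + ε/2 := add_le_add hpart1 hpart2
      _ = ε := ENNReal.add_halves ε
  -- norms of z
  have hzy : ∀ (a : ℝ), (fun k => a^(k:ℤ) • z k) = (fun k : ℤ => a^k • y k) + (fun k : ℤ => a^k • d k) := by
    intro a
    funext k
    simp only [Pi.add_apply, hddef]
    rw [← smul_add]
    congr 1
    abel
  have hwt₀z : wtSeq a₀ S₀.toFun z ≤ ((1 + 2*c₀) * M₀ + cn * (c₀ * N₀ x)) + ε := by
    calc wtSeq a₀ S₀.toFun z = S₀.toFun (fun k => a₀^k • z k) := rfl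
      _ ≤ S₀.toFun (fun k : ℤ => a₀^k • y k) + S₀.toFun (fun k : ℤ => a₀^k • d k) := by
          rw [hzy a₀]
          exact S₀.isBanachENorm.2.1 _ _
      _ ≤ ((1 + 2*c₀) * M₀ + cn * (c₀ * N₀ x)) + ε := add_le_add hwt₀y hd₀
  have hwt₁z : wtSeq a₁ S₁.toFun z ≤ ((1 + 2*c₁) * M₁ + cn * (c₁ * N₁ x)) + ε := by
    calc wtSeq a₁ S₁.toFun z = S₁.toFun (fun k => a₁^k • z k) := rfl
      _ ≤ S₁.toFun (fun k : ℤ => a₁^k • y k) + S₁.toFun (fun k : ℤ => a₁^k • d k) := by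
          rw [hzy a₁]
          exact S₁.isBanachENorm.2.1 _ _
      _ ≤ ((1 + 2*c₁) * M₁ + cn * (c₁ * N₁ x)) + ε := add_le_add hwt₁y hd₁
  -- conclude
  refine le_trans (iInf_le_of_le z (iInf_le_of_le hzsupp (iInf_le_of_le hzD
    (iInf_le_of_le hzsum le_rfl)))) ?_
  refine max_le ?_ ?_
  · refine hwt₀z.trans ?_
    refine add_le_add (add_le_add ?_ ?_) le_rfl
    · refine mul_le_mul' ?_ (le_max_left _ _)
      exact le_self_add
    · exact mul_le_mul' le_rfl (mul_le_mul' le_self_add le_self_add)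
  · refine hwt₁z.trans ?_
    refine add_le_add (add_le_add ?_ ?_) le_rfl
    · refine mul_le_mul' ?_ (le_max_right _ _)
      calc 1 + 2*c₁ ≤ (1 + 2*c₁) + 2*c₀ := le_self_add
        _ = 1 + 2*c₀ + 2*c₁ := by ring
    · exact mul_le_mul' le_rfl (mul_le_mul' le_add_self le_add_self)

end Statement4Core

/-- finite approximation. For `ℓ∞`-sequence structures and a dense
subspace `X̆ ⊆ X₀ ∩ X₁`, the interpolation norm of `x ∈ X̆` is equivalent (with constants
depending only on `θ`) to the corresponding infimum taken only over finitely nonzero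
representations with entries in `X̆`. -/
theorem statement4 (θ : ℝ) (hθ : θ ∈ Set.Ioo (0 : ℝ) 1) :
    ∃ C : ℝ≥0∞, C ≠ 0 ∧ C ≠ ∞ ∧
      ∀ (E : Type u) [NormedAddCommGroup E] [NormedSpace ℝ E],
      ∀ N₀ N₁ : BanachENorm ℝ E,
        (∀ v : E, enSum N₀.toFun N₁.toFun v = (‖v‖₊ : ℝ≥0∞)) →
      ∀ (S₀ : SeqStructure ℝ E N₀) (S₁ : SeqStructure ℝ E N₁),
        IsLinftySeqStructure S₀ → IsLinftySeqStructure S₁ →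
      ∀ D : Submodule ℝ E,
        (∀ w ∈ D, enInter N₀.toFun N₁.toFun w ≠ ∞) →
        (∀ v : E, enInter N₀.toFun N₁.toFun v ≠ ∞ → ∀ ε : ℝ≥0∞, 0 < ε →
          ∃ w ∈ D, enInter N₀.toFun N₁.toFun (v - w) < ε) →
      ∀ x ∈ D,
        (interpENorm S₀.toFun S₁.toFun θ x ≤
          C * ⨅ (y : ℤ → E) (_ : (Function.support y).Finite) (_ : ∀ k, y k ∈ D)
              (_ : ∑ᶠ k : ℤ, y k = x),
            max (wtSeq (Real.exp (-θ)) S₀.toFun y)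
              (wtSeq (Real.exp (1 - θ)) S₁.toFun y)) ∧
        ((⨅ (y : ℤ → E) (_ : (Function.support y).Finite) (_ : ∀ k, y k ∈ D)
              (_ : ∑ᶠ k : ℤ, y k = x),
            max (wtSeq (Real.exp (-θ)) S₀.toFun y)
              (wtSeq (Real.exp (1 - θ)) S₁.toFun y)) ≤
          C * interpENorm S₀.toFun S₁.toFun θ x) := by
  obtain ⟨hθ0, hθ1⟩ := hθ
  classical
  set r₀ : ℝ≥0 := ‖Real.exp (-θ)‖₊ with hr₀def
  set r₁ : ℝ≥0 := ‖Real.exp (θ-1)‖₊ with hr₁def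
  set c₀ : ℝ≥0∞ := (1 - (r₀:ℝ≥0∞))⁻¹ with hc₀def
  set c₁ : ℝ≥0∞ := (1 - (r₁:ℝ≥0∞))⁻¹ with hc₁def
  have hr₀coe : (r₀ : ℝ) = Real.exp (-θ) := by
    rw [hr₀def, coe_nnnorm, Real.norm_eq_abs, abs_of_pos (Real.exp_pos _)]
  have hr₁coe : (r₁ : ℝ) = Real.exp (θ-1) := by
    rw [hr₁def, coe_nnnorm, Real.norm_eq_abs, abs_of_pos (Real.exp_pos _)]
  have hr₀1 : (r₀:ℝ≥0∞) < 1 := by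
    rw [← ENNReal.coe_one, ENNReal.coe_lt_coe, ← NNReal.coe_lt_coe, hr₀coe]
    simpa using Real.exp_lt_one_iff.mpr (by linarith : -θ < 0)
  have hr₁1 : (r₁:ℝ≥0∞) < 1 := by
    rw [← ENNReal.coe_one, ENNReal.coe_lt_coe, ← NNReal.coe_lt_coe, hr₁coe]
    simpa using Real.exp_lt_one_iff.mpr (by linarith : θ - 1 < 0)
  have hc₀top : c₀ ≠ ∞ := ENNReal.inv_ne_top.mpr (tsub_pos_of_lt hr₀1).ne'
  have hc₁top : c₁ ≠ ∞ := ENNReal.inv_ne_top.mpr (tsub_pos_of_lt hr₁1).ne'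
  set Cc : ℝ≥0∞ := 1 + 2*c₀ + 2*c₁ with hCcdef
  have hCc0 : Cc ≠ 0 := by
    rw [hCcdef]
    intro h
    rw [add_eq_zero, add_eq_zero] at h
    exact one_ne_zero h.1.1
  have hCctop : Cc ≠ ∞ := by
    rw [hCcdef]
    exact ENNReal.add_ne_top.2 ⟨ENNReal.add_ne_top.2 ⟨by simp,
      ENNReal.mul_ne_top (by simp) hc₀top⟩, ENNReal.mul_ne_top (by simp) hc₁top⟩
  have hCc1 : (1:ℝ≥0∞) ≤ Cc := by
    rw [hCcdef]
    exact le_trans le_self_add le_self_add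
  refine ⟨Cc, hCc0, hCctop, ?_⟩
  intro E _ _ N₀b N₁b hsum S₀ S₁ hS₀ hS₁ D hDfin hdense x hxD
  have hNx₀ : N₀b.toFun x ≠ ∞ := by
    intro h
    exact hDfin x hxD (by simp [enInter, h])
  have hNx₁ : N₁b.toFun x ≠ ∞ := by
    intro h
    exact hDfin x hxD (by simp [enInter, h])
  constructor
  · -- interp ≤ Cc * Fin
    have h1 : interpENorm S₀.toFun S₁.toFun θ x ≤
        ⨅ (y : ℤ → E) (_ : (Function.support y).Finite) (_ : ∀ k, y k ∈ D)
          (_ : ∑ᶠ k : ℤ, y k = x),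
          max (wtSeq (Real.exp (-θ)) S₀.toFun y) (wtSeq (Real.exp (1 - θ)) S₁.toFun y) := by
      refine le_iInf fun y => le_iInf fun hyfin => le_iInf fun hyD => le_iInf fun hysum => ?_
      have hy0 : ∀ b ∉ hyfin.toFinset, y b = 0 := by
        intro b hb
        by_contra h
        exact hb (hyfin.mem_toFinset.2 h)
      have hsum' : HasSum y x := by
        have h2 : HasSum y (∑ b ∈ hyfin.toFinset, y b) := hasSum_sum_of_ne_finset_zero hy0
        rwa [← finsum_eq_sum y hyfin, hysum] at h2
      rw [interpENorm]
      exact iInf₂_le y hsum'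
    exact h1.trans (le_mul_of_one_le_left zero_le hCc1)
  · -- Fin ≤ Cc * interp
    refine ENNReal.le_of_forall_pos_le_add ?_
    intro ε' hε' htop
    have hI : interpENorm S₀.toFun S₁.toFun θ x ≠ ∞ := by
      intro h
      rw [h, ENNReal.mul_top hCc0] at htop
      exact lt_irrefl _ htop
    set I : ℝ≥0∞ := interpENorm S₀.toFun S₁.toFun θ x with hIdef
    set ε3 : ℝ≥0∞ := (ε':ℝ≥0∞)/3 with hε3def
    have hε30 : ε3 ≠ 0 := by
      rw [hε3def]
      simp [ENNReal.div_eq_zero_iff, hε'.ne']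
    have hε3top : ε3 ≠ ∞ := by
      rw [hε3def]
      exact (ENNReal.div_lt_top ENNReal.coe_ne_top (by norm_num)).ne
    set δ : ℝ≥0∞ := ε3 / Cc with hδdef
    have hδ0 : δ ≠ 0 := by
      rw [hδdef]
      exact (ENNReal.div_pos hε30 hCctop).ne'
    have hex : ∃ xv : ℤ → E, ∃ _ : HasSum xv x,
        max (wtSeq (Real.exp (-θ)) S₀.toFun xv) (wtSeq (Real.exp (1-θ)) S₁.toFun xv)
          < I + δ := by
      have h2 : interpENorm S₀.toFun S₁.toFun θ x < I + δ := ENNReal.lt_add_right hI hδ0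
      rw [interpENorm, iInf_lt_iff] at h2
      obtain ⟨xv, h2⟩ := h2
      rw [iInf_lt_iff] at h2
      obtain ⟨hs, h2⟩ := h2
      exact ⟨xv, hs, h2⟩
    obtain ⟨xv, hxsum, hmax⟩ := hex
    have hIδtop : I + δ ≠ ∞ := by
      refine ENNReal.add_ne_top.2 ⟨hI, ?_⟩
      rw [hδdef]
      exact (ENNReal.div_lt_top hε3top hCc0).ne
    have hM₀ : wtSeq (Real.exp (-θ)) S₀.toFun xv ≠ ∞ :=
      ne_top_of_le_ne_top hIδtop ((le_max_left _ _).trans hmax.le)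
    have hM₁ : wtSeq (Real.exp (1-θ)) S₁.toFun xv ≠ ∞ :=
      ne_top_of_le_ne_top hIδtop ((le_max_right _ _).trans hmax.le)
    set Q : ℝ≥0∞ := (c₀+c₁) * (N₀b.toFun x + N₁b.toFun x) with hQdef
    have hQtop : Q ≠ ∞ := by
      rw [hQdef]
      exact ENNReal.mul_ne_top (ENNReal.add_ne_top.2 ⟨hc₀top, hc₁top⟩)
        (ENNReal.add_ne_top.2 ⟨hNx₀, hNx₁⟩)
    have hn : ∃ n : ℕ, ((n:ℝ≥0∞)+1)⁻¹ * Q ≤ ε3 := by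
      rcases eq_or_ne Q 0 with hQ | hQ
      · exact ⟨0, by simp [hQ]⟩
      · obtain ⟨n, hgt⟩ := ENNReal.exists_nat_gt ((ENNReal.div_lt_top hQtop hε30).ne)
        refine ⟨n, ?_⟩
        have h3 : Q ≤ ((n:ℝ≥0∞)+1) * ε3 := by
          rw [ENNReal.div_lt_iff (Or.inl hε30) (Or.inl hε3top)] at hgt
          exact le_trans hgt.le (mul_le_mul' le_self_add le_rfl)
        have hn1ne0 : ((n:ℝ≥0∞)+1) ≠ 0 := by simp
        have hn1netop : ((n:ℝ≥0∞)+1) ≠ ∞ := by simp [ENNReal.add_ne_top]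
        calc ((n:ℝ≥0∞)+1)⁻¹ * Q ≤ ((n:ℝ≥0∞)+1)⁻¹ * (((n:ℝ≥0∞)+1) * ε3) :=
              mul_le_mul' le_rfl h3
          _ = (((n:ℝ≥0∞)+1)⁻¹ * ((n:ℝ≥0∞)+1)) * ε3 := by ring
          _ = ε3 := by rw [ENNReal.inv_mul_cancel hn1ne0 hn1netop, one_mul]
    obtain ⟨n, hn⟩ := hn
    have hcore := core θ hθ0 hθ1 N₀b N₁b hsum S₀ S₁ hS₀ hS₁ D hDfin hdense x hxD xv hxsum
      hM₀ hM₁ n ε3 (zero_lt_iff.mpr hε30) hε3top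
    rw [← hr₀def, ← hr₁def, ← hc₀def, ← hc₁def, ← hCcdef, ← hQdef] at hcore
    refine hcore.trans ?_
    calc Cc * max (wtSeq (Real.exp (-θ)) S₀.toFun xv) (wtSeq (Real.exp (1-θ)) S₁.toFun xv)
          + ((n:ℝ≥0∞)+1)⁻¹ * Q + ε3
        ≤ Cc * (I + δ) + ε3 + ε3 :=
          add_le_add (add_le_add (mul_le_mul' le_rfl hmax.le) hn) le_rfl
      _ = Cc * I + Cc * δ + ε3 + ε3 := by rw [mul_add]
      _ ≤ Cc * I + ε3 + ε3 + ε3 := by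
          have hCδ : Cc * δ ≤ ε3 := by
            rw [hδdef, ENNReal.mul_div_cancel hCc0 hCctop]
          exact add_le_add (add_le_add (add_le_add le_rfl hCδ) le_rfl) le_rfl
      _ = Cc * I + ε' := by
          have h3 : ε3 + ε3 + ε3 = (ε':ℝ≥0∞) := by
            rw [hε3def]
            rw [show (ε':ℝ≥0∞)/3 + (ε':ℝ≥0∞)/3 + (ε':ℝ≥0∞)/3 = 3 * ((ε':ℝ≥0∞)/3) by ring]
            exact ENNReal.mul_div_cancel (by norm_num) (by norm_num)
          rw [show Cc * I + ε3 + ε3 + ε3 = Cc * I + (ε3 + ε3 + ε3) from by ring, h3]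
end
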